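/- arXiv:1907.08781 — 8 statements merged into one kernel-verified Lean document; each statement's English description precedes it below -/
import Mathlib

section
/- Let G be a group acting on a finite set X, and let S ⊆ X be a subset such that the stabilizer of S in G acts on S by even permutations only. Then the element σ_S = Σ_{γ ∈ G/G_S} γ·(s(1) ∧ s(2) ∧ ⋯ ∧ s(g)) (where s is a fixed numbering of S with |S| = g) is a nonzero G-invariant element of the g-th exterior power Λ^g (ℚ X) of the permutation representation of G on ℚ X. -/
open scoped Pointwise

theorem stab_fix {G X : Type*} [Group G] [Fintype X] [DecidableEq X]
    [MulAction G X] {g : ℕ} (S : Finset X) (hScard : S.card = g)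
    (horient : ∀ (γ : G) (h : ∀ x : X, x ∈ S ↔ γ • x ∈ S),
      Equiv.Perm.sign ((MulAction.toPerm γ).subtypePerm (p := fun x => x ∈ S) (fun x => (h x).symm)) = 1)
    (s : Fin g → X) (hsinj : Function.Injective s) (hsmem : ∀ i, s i ∈ S)
    {τ : G} (hτ : τ ∈ MulAction.stabilizer G (S : Set X)) :
    ∃ π : Equiv.Perm (Fin g), (∀ i, τ • s i = s (π i)) ∧ Equiv.Perm.sign π = 1 := by
  have hτ' : τ • (S : Set X) = S := hτ
  have h : ∀ x : X, x ∈ S ↔ τ • x ∈ S := by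
    intro x
    constructor
    · intro hx
      have : τ • x ∈ τ • (S : Set X) := Set.smul_mem_smul_set (by exact_mod_cast hx)
      rw [hτ'] at this; exact_mod_cast this
    · intro hx
      have : τ • x ∈ τ • (S : Set X) := by rw [hτ']; exact_mod_cast hx
      have := Set.smul_mem_smul_set_iff.1 this
      exact_mod_cast this
  have hbij : Function.Bijective (fun i : Fin g => (⟨s i, hsmem i⟩ : {x // x ∈ S})) := by
    rw [Fintype.bijective_iff_injective_and_card]
    constructor
    · intro a b hab
      exact hsinj (congrArg Subtype.val hab)
    · simp [hScard]
  let e : Fin g ≃ {x // x ∈ S} := Equiv.ofBijective _ hbij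
  let sp := (MulAction.toPerm τ).subtypePerm (p := fun x => x ∈ S) (fun x => (h x).symm)
  refine ⟨(Equiv.permCongr e).symm sp, ?_, ?_⟩
  · intro i
    have h1 : (Equiv.permCongr e) ((Equiv.permCongr e).symm sp) = sp :=
      (Equiv.permCongr e).apply_symm_apply sp
    have h2 := congrFun (congrArg (fun p => (DFunLike.coe p)) h1) (e i)
    simp only [Equiv.permCongr_apply, Equiv.symm_apply_apply] at h2
    have h3 : sp (e i) = ⟨τ • s i, (h _).1 (hsmem i)⟩ := rfl
    rw [h3] at h2
    have : (e (((Equiv.permCongr e).symm sp) i) : X) = τ • s i := by rw [h2]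
    simpa [e, Equiv.ofBijective] using this.symm
  · rw [← horient τ h]
    exact Equiv.Perm.sign_permCongr e _ ▸ by
      rw [(Equiv.permCongr e).apply_symm_apply sp]

/-- Let `G` act on a finite set `X`, and let `S ⊆ X` be a subset whose
stabilizer acts on `S` by even permutations (a `G`-orientable set), with `|S| = g ≥ 1`,
numbered by `s : Fin g → X`.  If `Γ` is a set of representatives of the cosets
`G ⧸ G_S`, then `σ_S = ∑_{γ ∈ Γ} γ · (s 1 ∧ ⋯ ∧ s g)` is a nonzero `G`-invariant
element of the `g`-th exterior power of the permutation representation `ℚ X`. -/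
theorem statement0 {G X : Type*} [Group G] [Fintype X] [DecidableEq X]
    [MulAction G X] {g : ℕ} (hg : 1 ≤ g) (S : Finset X) (hScard : S.card = g)
    -- `S` is `G`-orientable: every element of the stabilizer of `S` induces an
    -- even permutation of `S`
    (horient : ∀ (γ : G) (h : ∀ x : X, x ∈ S ↔ γ • x ∈ S),
      Equiv.Perm.sign ((MulAction.toPerm γ).subtypePerm (p := fun x => x ∈ S) (fun x => (h x).symm)) = 1)
    -- a numbering of `S`
    (s : Fin g → X) (hsinj : Function.Injective s) (hsmem : ∀ i, s i ∈ S)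
    -- `Γ` is a system of representatives for the cosets `G ⧸ G_S`
    (Γ : Finset G)
    (hΓ : ∀ γ : G, ∃! δ : G, δ ∈ Γ ∧
      (QuotientGroup.mk δ : G ⧸ MulAction.stabilizer G (S : Set X)) = QuotientGroup.mk γ) :
    -- the action of `γ ∈ G` on the exterior algebra of `ℚ X`
    ∀ T : G → (ExteriorAlgebra ℚ (X →₀ ℚ) →ₐ[ℚ] ExteriorAlgebra ℚ (X →₀ ℚ)),
      (∀ γ : G, T γ = ExteriorAlgebra.map
        (Finsupp.lmapDomain ℚ ℚ (fun x : X => γ • x))) →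
    -- the conclusion: `σ_S` is nonzero and `G`-invariant
    ∀ σ : ExteriorAlgebra ℚ (X →₀ ℚ),
      σ = ∑ γ ∈ Γ, T γ (ExteriorAlgebra.ιMulti ℚ g (fun i => Finsupp.single (s i) 1)) →
      σ ≠ 0 ∧ ∀ γ : G, T γ σ = σ := by
  classical
  intro T hT σ hσ
  set H := MulAction.stabilizer G (S : Set X) with hH
  set w : ExteriorAlgebra ℚ (X →₀ ℚ) :=
    ExteriorAlgebra.ιMulti ℚ g (fun i => Finsupp.single (s i) 1) with hw
  -- action on ιMulti of singles
  have hTsingle : ∀ (α : G) (u : Fin g → X),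
      T α (ExteriorAlgebra.ιMulti ℚ g (fun i => Finsupp.single (u i) 1))
        = ExteriorAlgebra.ιMulti ℚ g (fun i => Finsupp.single (α • u i) 1) := by
    intro α u
    rw [hT, ExteriorAlgebra.map_apply_ιMulti]
    congr 1
    funext i
    simp [Finsupp.mapDomain_single]
  -- invariance of w under the stabilizer
  have hfix : ∀ τ ∈ H, ExteriorAlgebra.ιMulti ℚ g (fun i => Finsupp.single (τ • s i) 1) = w := by
    intro τ hτ
    obtain ⟨π, hπ, hsign⟩ := stab_fix S hScard horient s hsinj hsmem hτ
    have h1 : (fun i => Finsupp.single (τ • s i) (1:ℚ))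
        = (fun i => Finsupp.single (s i) (1:ℚ)) ∘ π := by
      funext i; simp [hπ i]
    rw [h1, AlternatingMap.map_perm, hsign, one_smul]
  -- T α w expressed as ιMulti
  have hTw : ∀ α : G, T α w = ExteriorAlgebra.ιMulti ℚ g (fun i => Finsupp.single (α • s i) 1) :=
    fun α => hTsingle α s
  -- T γ (T δ w) = T (γ*δ) w
  have hTmul : ∀ γ δ : G, T γ (T δ w) = T (γ * δ) w := by
    intro γ δ
    rw [hTw, hTsingle, hTw]
    congr 1; funext i; rw [mul_smul]
  -- representatives
  have hrep : ∀ α : G, ∀ δ ∈ Γ, (QuotientGroup.mk δ : G ⧸ H) = QuotientGroup.mk α →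
      ∀ δ' ∈ Γ, (QuotientGroup.mk δ' : G ⧸ H) = QuotientGroup.mk α → δ = δ' := by
    intro α δ hδ hδq δ' hδ' hδ'q
    obtain ⟨d, _, hu⟩ := hΓ α
    rw [hu δ ⟨hδ, hδq⟩, hu δ' ⟨hδ', hδ'q⟩]
  choose r hrΓ hrq using fun α => (hΓ α).exists
  have hrfix : ∀ δ ∈ Γ, r δ = δ := by
    intro δ hδ
    exact hrep δ _ (hrΓ δ) (hrq δ) δ hδ rfl
  -- T α w = T (r α) w
  have hTr : ∀ α : G, T α w = T (r α) w := by
    intro α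
    have hco : (r α)⁻¹ * α ∈ H := (QuotientGroup.eq (s := H)).1 (hrq α)
    have heq : α = r α * ((r α)⁻¹ * α) := by group
    have key : T (r α * ((r α)⁻¹ * α)) w = T (r α) w := by
      rw [← hTmul, hTw ((r α)⁻¹ * α), hfix _ hco]
    conv_lhs => rw [heq]
    exact key
  constructor
  · -- nonzero
    intro hσ0
    -- surjectivity of the numbering onto S
    have hsurj : ∀ x ∈ S, ∃ j, s j = x := by
      have himg : Finset.image s Finset.univ = S := by
        apply Finset.eq_of_subset_of_card_le
        · intro x hx
          obtain ⟨j, _, hj⟩ := Finset.mem_image.1 hx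
          exact hj ▸ hsmem j
        · rw [hScard, Finset.card_image_of_injective _ hsinj, Finset.card_univ, Fintype.card_fin]
      intro x hx
      rw [← himg] at hx
      obtain ⟨j, _, hj⟩ := Finset.mem_image.1 hx
      exact ⟨j, hj⟩
    -- the detecting functional
    let L : (X →₀ ℚ) →ₗ[ℚ] (Fin g → ℚ) := LinearMap.pi (fun i => Finsupp.lapply (s i))
    let φ : (X →₀ ℚ) [⋀^Fin g]→ₗ[ℚ] ℚ := (Matrix.detRowAlternating).compLinearMap L
    let F : ∀ n, (X →₀ ℚ) [⋀^Fin n]→ₗ[ℚ] ℚ := Function.update (fun n => 0) g φ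
    have hF : F g = φ := by simp only [F, Function.update_self]
    have hterm : ∀ γ ∈ Γ, ExteriorAlgebra.liftAlternating F (T γ w)
        = if γ ∈ H then 1 else 0 := by
      intro γ _
      rw [hTw, ExteriorAlgebra.liftAlternating_apply_ιMulti, hF]
      have hφ : φ (fun j => Finsupp.single (γ • s j) 1)
          = (Matrix.of fun j i => (Finsupp.single (γ • s j) (1:ℚ)) (s i)).det := rfl
      rw [hφ]
      by_cases hγ : γ ∈ H
      · obtain ⟨π, hπ, hsign⟩ := stab_fix S hScard horient s hsinj hsmem hγ
        rw [if_pos hγ]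
        have hm : (Matrix.of fun j i => (Finsupp.single (γ • s j) (1:ℚ)) (s i))
            = π.permMatrix ℚ := by
          ext j i
          by_cases hji : π j = i
          · simp [hπ j, Finsupp.single_apply, Equiv.Perm.permMatrix, PEquiv.toMatrix_apply,
              Equiv.toPEquiv_apply, hsinj.eq_iff, hji]
          · simp [hπ j, Finsupp.single_apply, Equiv.Perm.permMatrix, PEquiv.toMatrix_apply,
              Equiv.toPEquiv_apply, hsinj.eq_iff, hji]
        rw [hm, Matrix.det_permutation, hsign]
        norm_num
      · rw [if_neg hγ]
        -- some γ • s j escapes S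
        have hexist : ∃ j, γ • s j ∉ S := by
          by_contra hall
          push_neg at hall
          apply hγ
          have himg : Finset.image (fun x => γ • x) S = S := by
            apply Finset.eq_of_subset_of_card_le
            · intro y hy
              obtain ⟨x, hx, hxy⟩ := Finset.mem_image.1 hy
              obtain ⟨j, hj⟩ := hsurj x hx
              rw [← hxy, ← hj]
              exact hall j
            · rw [Finset.card_image_of_injective _ (MulAction.injective γ)]
          show γ • (S : Set X) = S
          conv_rhs => rw [← himg]
          rw [Finset.coe_image, ← Set.image_smul]
        obtain ⟨j, hj⟩ := hexist
        apply Matrix.det_eq_zero_of_row_eq_zero j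
        intro i
        simp only [Matrix.of_apply, Finsupp.single_apply]
        rw [if_neg]
        intro h
        exact hj (h ▸ hsmem i)
    -- exactly one representative lies in the stabilizer
    obtain ⟨δ0, ⟨hδ0Γ, hδ0q⟩, _⟩ := hΓ 1
    have hδ0H : δ0 ∈ H := by
      have h2 : δ0⁻¹ * 1 ∈ H := (QuotientGroup.eq (s := H)).1 hδ0q
      rw [mul_one] at h2
      exact inv_mem_iff.1 h2
    have hiff : ∀ γ ∈ Γ, ((γ ∈ H) ↔ γ = δ0) := by
      intro γ hγΓ
      constructor
      · intro hγH
        refine hrep 1 γ hγΓ ?_ δ0 hδ0Γ hδ0q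
        rw [QuotientGroup.eq]
        simpa using inv_mem hγH
      · rintro rfl; exact hδ0H
    have hlf : ExteriorAlgebra.liftAlternating F σ = 1 := by
      rw [hσ, map_sum, Finset.sum_congr rfl hterm,
        Finset.sum_congr rfl (fun γ hγ => if_congr (hiff γ hγ) rfl rfl),
        Finset.sum_ite_eq' Γ δ0 (fun _ => (1:ℚ)), if_pos hδ0Γ]
    rw [hσ0, map_zero] at hlf
    exact zero_ne_one hlf
  · -- invariance
    intro γ
    rw [hσ, map_sum]
    have h1 : ∀ δ ∈ Γ, T γ (T δ w) = T (r (γ * δ)) w := by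
      intro δ _
      rw [hTmul, hTr]
    rw [Finset.sum_congr rfl h1]
    refine Finset.sum_nbij' (fun δ => r (γ * δ)) (fun δ => r (γ⁻¹ * δ)) (fun δ _ => hrΓ _)
      (fun δ _ => hrΓ _) ?_ ?_ (fun δ _ => rfl)
    · intro δ hδ
      refine hrep (γ⁻¹ * r (γ * δ)) _ (hrΓ _) (hrq _) δ hδ ?_
      have h2 : ((r (γ*δ))⁻¹ * (γ * δ)) ∈ H := (QuotientGroup.eq (s := H)).1 (hrq (γ*δ))
      rw [eq_comm, QuotientGroup.eq]
      convert h2 using 1; group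
    · intro δ hδ
      refine hrep (γ * r (γ⁻¹ * δ)) _ (hrΓ _) (hrq _) δ hδ ?_
      have h2 : ((r (γ⁻¹*δ))⁻¹ * (γ⁻¹ * δ)) ∈ H := (QuotientGroup.eq (s := H)).1 (hrq (γ⁻¹*δ))
      rw [eq_comm, QuotientGroup.eq]
      convert h2 using 1; group
end

section
/- Let G be a group acting on a finite set X and g ≥ 1 an integer. The dimension of the G-invariant subspace of Λ^g(ℚ X) equals the number of G-orbits of G-orientable subsets of X with g elements. Moreover, choosing one representative S from each such orbit, the elements σ_S form a ℚ-basis of the G-invariants. -/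
open scoped Pointwise

set_option linter.unusedSectionVars false
set_option maxHeartbeats 1000000

section aux
variable {X : Type*} [Fintype X] [DecidableEq X] [LinearOrder X] {g : ℕ}

/-- wedge of singles -/
noncomputable def ws (s : Fin g → X) : ExteriorAlgebra ℚ (X →₀ ℚ) :=
  ExteriorAlgebra.ιMulti ℚ g fun i => Finsupp.single (s i) 1

/-- basis vectors of the g-th exterior power, indexed by g-element subsets -/
noncomputable def eB (S : {S : Finset X // S.card = g}) : ExteriorAlgebra ℚ (X →₀ ℚ) :=
  ws fun i => S.1.orderIsoOfFin S.2 i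

noncomputable def altDet (S : {S : Finset X // S.card = g}) :
    (X →₀ ℚ) [⋀^Fin g]→ₗ[ℚ] ℚ :=
  (Matrix.detRowAlternating : (Fin g → ℚ) [⋀^Fin g]→ₗ[ℚ] ℚ).compLinearMap
    (LinearMap.pi fun j => Finsupp.lapply (S.1.orderIsoOfFin S.2 j))

/-- coordinate functional attached to a g-element subset -/
noncomputable def coordB (S : {S : Finset X // S.card = g}) :
    ExteriorAlgebra ℚ (X →₀ ℚ) →ₗ[ℚ] ℚ :=
  ExteriorAlgebra.liftAlternating (Function.update 0 g (altDet S))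

lemma coordB_ws (S : {S : Finset X // S.card = g}) (s : Fin g → X) :
    coordB S (ws s) =
      Matrix.det (Matrix.of fun i j =>
        if s i = S.1.orderIsoOfFin S.2 j then (1:ℚ) else 0) := by
  rw [coordB, ws, ExteriorAlgebra.liftAlternating_apply_ιMulti, Function.update_self]
  rw [altDet, AlternatingMap.compLinearMap_apply]
  show Matrix.det _ = _
  congr 1
  ext i j
  simp [Finsupp.single_apply, LinearMap.pi_apply]
  congr

lemma coordB_ws_of_notin (S : {S : Finset X // S.card = g}) (s : Fin g → X)
    (i : Fin g) (hi : s i ∉ S.1) : coordB S (ws s) = 0 := by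
  rw [coordB_ws]
  apply Matrix.det_eq_zero_of_row_eq_zero i
  intro j
  simp only [Matrix.of_apply, ite_eq_right_iff]
  intro h
  exact absurd (h ▸ (S.1.orderIsoOfFin S.2 j).2) hi

lemma coordB_eB (S T : {S : Finset X // S.card = g}) :
    coordB T (eB S) = if S = T then 1 else 0 := by
  by_cases h : S = T
  · subst h
    rw [eB, coordB_ws, if_pos rfl]
    have : (Matrix.of fun i j =>
        if (S.1.orderIsoOfFin S.2 i : X) = S.1.orderIsoOfFin S.2 j then (1:ℚ) else 0) = 1 := by
      ext i j
      simp only [Matrix.of_apply, Matrix.one_apply]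
      congr 1
      simp [Subtype.ext_iff.symm, (S.1.orderIsoOfFin S.2).injective.eq_iff]
    rw [this, Matrix.det_one]
  · rw [if_neg h, eB]
    have hST : ¬ (S.1 ⊆ T.1) := by
      intro hsub
      exact h (Subtype.ext (Finset.eq_of_subset_of_card_le hsub (T.2.trans S.2.symm).le))
    obtain ⟨x, hxS, hxT⟩ := Finset.not_subset.mp hST
    obtain ⟨i, hi⟩ := (S.1.orderIsoOfFin S.2).surjective ⟨x, hxS⟩
    refine coordB_ws_of_notin T _ i ?_
    rw [show ((S.1.orderIsoOfFin S.2) i : X) = x from congrArg Subtype.val hi]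
    exact hxT

lemma ws_comp_perm (s : Fin g → X) (π : Equiv.Perm (Fin g)) :
    ws (s ∘ π) = Equiv.Perm.sign π • ws s := by
  rw [ws, ws]
  have := (ExteriorAlgebra.ιMulti ℚ g (M := X →₀ ℚ)).map_perm
    (fun i => Finsupp.single (s i) 1) π
  exact this

lemma ws_not_inj (s : Fin g → X) (h : ¬ Function.Injective s) : ws s = 0 := by
  rw [ws]
  apply AlternatingMap.map_eq_zero_of_not_injective
  intro hinj
  refine h fun i j hij => hinj ?_
  simp only [hij]

lemma ws_mem (s : Fin g → X) : ws s ∈ ⋀[ℚ]^g (X →₀ ℚ) :=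
  ExteriorAlgebra.ιMulti_range ℚ g ⟨_, rfl⟩

lemma ws_eq_sign_smul (s : Fin g → X) (hs : Function.Injective s)
    (S : {S : Finset X // S.card = g}) (hr : ∀ i, s i ∈ S.1) :
    ∃ ε : ℤˣ, ws s = ε • eB S := by
  have hbij : Function.Bijective (fun i => (⟨s i, hr i⟩ : {x // x ∈ S.1})) := by
    rw [Fintype.bijective_iff_injective_and_card]
    exact ⟨fun i j hij => hs (congrArg Subtype.val hij), by simp [Fintype.card_coe, S.2]⟩
  let e : Fin g ≃ {x // x ∈ S.1} := Equiv.ofBijective _ hbij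
  let π : Equiv.Perm (Fin g) := e.trans (S.1.orderIsoOfFin S.2).toEquiv.symm
  refine ⟨Equiv.Perm.sign π⁻¹, ?_⟩
  have hcomp : s = (fun i => (S.1.orderIsoOfFin S.2 i : X)) ∘ π := by
    funext i
    simp only [Function.comp_apply, π, Equiv.trans_apply]
    rw [show (S.1.orderIsoOfFin S.2) ((S.1.orderIsoOfFin S.2).toEquiv.symm (e i)) = e i from
      (S.1.orderIsoOfFin S.2).apply_symm_apply _]
    rfl
  rw [hcomp, ws_comp_perm, eB]
  congr 1
  simp

lemma map_ws (f : X → X) (s : Fin g → X) :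
    ExteriorAlgebra.map (Finsupp.lmapDomain ℚ ℚ f) (ws s) = ws (f ∘ s) := by
  rw [ws, ws]
  rw [ExteriorAlgebra.map_apply_ιMulti]
  congr 1
  funext i
  simp [Finsupp.lmapDomain_apply, Finsupp.mapDomain_single]

lemma iMulti_expand (v : Fin g → (X →₀ ℚ)) :
    ExteriorAlgebra.ιMulti ℚ g v = ∑ r : Fin g → X, (∏ i, v i (r i)) • ws r := by
  have hv : ∀ i, v i = ∑ x : X, (v i x) • Finsupp.single x 1 := by
    intro i; ext a; simp [Finsupp.single_apply]
  have key := (ExteriorAlgebra.ιMulti ℚ g (M := X →₀ ℚ)).toMultilinearMap.map_sum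
    (α := fun _ => X) (g := fun i x => (v i x) • Finsupp.single x 1)
  simp only [AlternatingMap.coe_multilinearMap] at key
  calc ExteriorAlgebra.ιMulti ℚ g v
      = ExteriorAlgebra.ιMulti ℚ g (fun i => ∑ x : X, (v i x) • Finsupp.single x 1) := by
        congr 1; funext i; exact hv i
    _ = ∑ r : Fin g → X,
          ExteriorAlgebra.ιMulti ℚ g (fun i => (v i (r i)) • Finsupp.single (r i) 1) := key
    _ = ∑ r : Fin g → X, (∏ i, v i (r i)) • ws r := by
        refine Finset.sum_congr rfl fun r _ => ?_
        rw [ws]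
        exact (ExteriorAlgebra.ιMulti ℚ g (M := X →₀ ℚ)).toMultilinearMap.map_smul_univ _ _

lemma ws_mem_span (s : Fin g → X) :
    ws s ∈ Submodule.span ℚ (Set.range (eB (X := X) (g := g))) := by
  by_cases hinj : Function.Injective s
  · have hcard : (Finset.image s Finset.univ).card = g := by
      rw [Finset.card_image_of_injective _ hinj, Finset.card_univ, Fintype.card_fin]
    obtain ⟨ε, hε⟩ := ws_eq_sign_smul s hinj ⟨Finset.image s Finset.univ, hcard⟩
      (fun i => Finset.mem_image_of_mem s (Finset.mem_univ i))
    rw [hε]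
    exact Submodule.smul_mem _ _ (Submodule.subset_span ⟨_, rfl⟩)
  · rw [ws_not_inj s hinj]; exact Submodule.zero_mem _

lemma mem_span_eB {x : ExteriorAlgebra ℚ (X →₀ ℚ)} (hx : x ∈ ⋀[ℚ]^g (X →₀ ℚ)) :
    x ∈ Submodule.span ℚ (Set.range (eB (X := X) (g := g))) := by
  rw [← ExteriorAlgebra.ιMulti_span_fixedDegree] at hx
  refine Submodule.span_le.mpr ?_ hx
  rintro _ ⟨v, rfl⟩
  rw [iMulti_expand]
  exact Submodule.sum_mem _ fun r _ => Submodule.smul_mem _ _ (ws_mem_span r)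

lemma eq_sum_coordB {x : ExteriorAlgebra ℚ (X →₀ ℚ)} (hx : x ∈ ⋀[ℚ]^g (X →₀ ℚ)) :
    x = ∑ S : {S : Finset X // S.card = g}, coordB S x • eB S := by
  have hx' := mem_span_eB hx
  set Φ : ExteriorAlgebra ℚ (X →₀ ℚ) →ₗ[ℚ] ExteriorAlgebra ℚ (X →₀ ℚ) :=
    LinearMap.id - ∑ S : {S : Finset X // S.card = g}, (coordB S).smulRight (eB S) with hΦ
  have hΦ0 : ∀ y ∈ Submodule.span ℚ (Set.range (eB (X := X) (g := g))), Φ y = 0 := by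
    intro y hy
    induction hy using Submodule.span_induction with
    | mem y hy =>
      obtain ⟨S₀, rfl⟩ := hy
      simp only [hΦ, LinearMap.sub_apply, LinearMap.id_apply, LinearMap.sum_apply,
        LinearMap.smulRight_apply, coordB_eB, sub_eq_zero]
      rw [Finset.sum_congr rfl (fun S _ => by rw [ite_smul, one_smul, zero_smul])]
      rw [Finset.sum_ite_eq Finset.univ S₀ eB]
      simp
    | zero => simp
    | add y z hy hz hy' hz' => rw [map_add, hy', hz', add_zero]
    | smul a y hy hy' => rw [map_smul, hy', smul_zero]
  have := hΦ0 x hx'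
  simp only [hΦ, LinearMap.sub_apply, LinearMap.id_apply, LinearMap.sum_apply,
    LinearMap.smulRight_apply, sub_eq_zero] at this
  exact this


section auxG
variable {G : Type*} [Group G] [MulAction G X]

/-- action of `G` on `g`-element subsets -/
def smulS (γ : G) (S : {S : Finset X // S.card = g}) : {S : Finset X // S.card = g} :=
  ⟨γ • S.1, (Finset.card_smul_finset γ S.1).trans S.2⟩

lemma smulS_inv (γ : G) (S : {S : Finset X // S.card = g}) : smulS γ (smulS γ⁻¹ S) = S :=
  Subtype.ext (smul_inv_smul γ S.1)

lemma smulS_eq_iff (γ : G) (S T : {S : Finset X // S.card = g}) :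
    smulS γ S = T ↔ S = smulS γ⁻¹ T := by
  constructor
  · rintro rfl; exact Subtype.ext (inv_smul_smul γ S.1).symm
  · rintro rfl; exact smulS_inv γ T

lemma ws_stab (S : Finset X) (hcard : S.card = g) (s : Fin g → X)
    (hs : Function.Injective s) (hr : ∀ i, s i ∈ S) (γ : G)
    (h : ∀ x : X, x ∈ S ↔ γ • x ∈ S) :
    ws ((fun x => γ • x) ∘ s) =
      Equiv.Perm.sign ((MulAction.toPerm γ).subtypePerm (p := fun x => x ∈ S) (fun x => (h x).symm)) • ws s := by
  have hbij : Function.Bijective (fun i => (⟨s i, hr i⟩ : {x // x ∈ S})) := by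
    rw [Fintype.bijective_iff_injective_and_card]
    exact ⟨fun i j hij => hs (congrArg Subtype.val hij), by simp [Fintype.card_coe, hcard]⟩
  set e : Fin g ≃ {x // x ∈ S} := Equiv.ofBijective _ hbij with he
  set p : Equiv.Perm {x // x ∈ S} := (MulAction.toPerm γ).subtypePerm (p := fun x => x ∈ S) (fun x => (h x).symm) with hp
  set π : Equiv.Perm (Fin g) := e.symm.permCongr p with hπ
  have hcomp : (fun x => γ • x) ∘ s = s ∘ π := by
    funext i
    have h1 : ∀ j, s j = (e j : X) := fun j => rfl
    simp only [Function.comp_apply, hπ, Equiv.permCongr_apply, Equiv.symm_symm]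
    rw [h1 (e.symm (p (e i))), Equiv.apply_symm_apply]
    rfl
  rw [hcomp, ws_comp_perm, hπ, Equiv.Perm.sign_permCongr]

/-- the action of γ sends `eB S` to a sign times `eB (γ • S)` -/
lemma map_eB (γ : G) (S : {S : Finset X // S.card = g}) :
    ∃ ε : ℤˣ, ExteriorAlgebra.map (Finsupp.lmapDomain ℚ ℚ (fun x : X => γ • x)) (eB S) =
      ε • eB (smulS γ S) := by
  rw [eB, map_ws]
  have h1 : Function.Injective ((fun x : X => γ • x) ∘ fun i => (S.1.orderIsoOfFin S.2 i : X)) :=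
    fun i j hij => (S.1.orderIsoOfFin S.2).injective
      (Subtype.ext (MulAction.injective γ hij))
  have h2 : ∀ i, ((fun x : X => γ • x) ∘ fun i => (S.1.orderIsoOfFin S.2 i : X)) i ∈
      (smulS γ S).1 :=
    fun i => Finset.smul_mem_smul_finset (S.1.orderIsoOfFin S.2 i).2
  exact ws_eq_sign_smul _ h1 _ h2

/-- transformation of coordinates under the action, abstract sign -/
lemma coordB_map (γ : G) (T : {S : Finset X // S.card = g})
    {y : ExteriorAlgebra ℚ (X →₀ ℚ)} (hy : y ∈ ⋀[ℚ]^g (X →₀ ℚ)) :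
    ∃ ε : ℚ, (ε = 1 ∨ ε = -1) ∧
      coordB T (ExteriorAlgebra.map (Finsupp.lmapDomain ℚ ℚ (fun x : X => γ • x)) y) =
        ε * coordB (smulS γ⁻¹ T) y := by
  set T' := smulS γ⁻¹ T with hT'
  obtain ⟨ε, hε⟩ := map_eB γ T'
  have hTT : smulS γ T' = T := smulS_inv γ T
  rw [hTT] at hε
  refine ⟨((ε : ℤ) : ℚ), by rcases Int.units_eq_one_or ε with h | h <;> simp [h], ?_⟩
  conv_lhs => rw [eq_sum_coordB hy]
  rw [map_sum, map_sum]
  have hterm : ∀ S : {S : Finset X // S.card = g},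
      coordB T (ExteriorAlgebra.map (Finsupp.lmapDomain ℚ ℚ (fun x : X => γ • x))
        (coordB S y • eB S)) =
      if S = T' then ((ε : ℤ) : ℚ) * coordB S y else 0 := by
    intro S
    by_cases hS : S = T'
    · subst hS
      rw [map_smul, map_smul, hε, if_pos rfl]
      rcases Int.units_eq_one_or ε with h | h <;>
        simp [h, coordB_eB, mul_comm]
    · rw [if_neg hS, map_smul, map_smul]
      obtain ⟨ε', hε'⟩ := map_eB γ S
      rw [hε']
      have hne : smulS γ S ≠ T := fun hc => hS ((smulS_eq_iff γ S T).mp hc)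
      rcases Int.units_eq_one_or ε' with h | h <;>
        simp [h, coordB_eB, hne]
  rw [Finset.sum_congr rfl fun S _ => hterm S]
  rw [Finset.sum_ite_eq' Finset.univ T' _]
  simp

/-- precise sign in the stabilizer case -/
lemma coordB_map_stab (γ : G) (S : {S : Finset X // S.card = g})
    (h : ∀ x : X, x ∈ S.1 ↔ γ • x ∈ S.1)
    {y : ExteriorAlgebra ℚ (X →₀ ℚ)} (hy : y ∈ ⋀[ℚ]^g (X →₀ ℚ)) :
    coordB S (ExteriorAlgebra.map (Finsupp.lmapDomain ℚ ℚ (fun x : X => γ • x)) y) =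
      Equiv.Perm.sign ((MulAction.toPerm γ).subtypePerm (p := fun x => x ∈ S.1) (fun x => (h x).symm)) • coordB S y := by
  have hfix : smulS γ S = S := by
    apply Subtype.ext
    apply Finset.eq_of_subset_of_card_le
    · intro z hz
      obtain ⟨b, hb, rfl⟩ := Finset.mem_smul_finset.mp hz
      exact (h b).mp hb
    · exact le_of_eq (S.2.trans (smulS γ S).2.symm)
  conv_lhs => rw [eq_sum_coordB hy]
  rw [map_sum, map_sum]
  have hterm : ∀ S' : {S : Finset X // S.card = g},
      coordB S (ExteriorAlgebra.map (Finsupp.lmapDomain ℚ ℚ (fun x : X => γ • x))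
        (coordB S' y • eB S')) =
      if S' = S then Equiv.Perm.sign ((MulAction.toPerm γ).subtypePerm (p := fun x => x ∈ S.1) (fun x => (h x).symm)) • coordB S y
      else 0 := by
    intro S'
    by_cases hS : S' = S
    · subst hS
      rw [map_smul, map_smul]
      have hinj : Function.Injective (fun i => (S'.1.orderIsoOfFin S'.2 i : X)) :=
        fun i j hij => (S'.1.orderIsoOfFin S'.2).injective (Subtype.ext hij)
      have hws := ws_stab S'.1 S'.2 (fun i => (S'.1.orderIsoOfFin S'.2 i : X)) hinj
        (fun i => (S'.1.orderIsoOfFin S'.2 i).2) γ h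
      have hmap : ExteriorAlgebra.map (Finsupp.lmapDomain ℚ ℚ (fun x : X => γ • x)) (eB S') =
          Equiv.Perm.sign ((MulAction.toPerm γ).subtypePerm (p := fun x => x ∈ S'.1) (fun x => (h x).symm)) • eB S' := by
        rw [eB, map_ws]; exact hws
      rw [hmap, if_pos rfl]
      rcases Int.units_eq_one_or (Equiv.Perm.sign ((MulAction.toPerm γ).subtypePerm (p := fun x => x ∈ S'.1) (fun x => (h x).symm)))
        with hu | hu <;> simp [hu, coordB_eB]
    · rw [if_neg hS, map_smul, map_smul]
      obtain ⟨ε', hε'⟩ := map_eB γ S'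
      rw [hε']
      have hne : smulS γ S' ≠ S := by
        intro hc
        rw [← hfix] at hc
        exact hS (Subtype.ext (smul_left_cancel γ (Subtype.ext_iff.mp hc)))
      rcases Int.units_eq_one_or ε' with hu | hu <;>
        simp [hu, coordB_eB, hne]
  rw [Finset.sum_congr rfl fun S' _ => hterm S']
  rw [Finset.sum_ite_eq' Finset.univ S _]
  simp

end auxG

end aux


/-- Let `G` act on a finite set `X` and `g ≥ 1`.  Given a system `𝒮` of
representatives for the `G`-orbits of `G`-orientable `g`-element subsets of `X`, the
associated elements `σ_S` (for `S ∈ 𝒮`) form a `ℚ`-basis of the `G`-invariant subspace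
of `Λ^g (ℚ X)`; in particular the dimension of the invariant subspace is the number of
`G`-orbits of `G`-orientable `g`-element subsets. -/
theorem statement1 {G X : Type*} [Group G] [Fintype X] [DecidableEq X]
    [MulAction G X] {g : ℕ} (hg : 1 ≤ g)
    -- the `G`-orientability predicate on subsets of `X`
    (Orientable : Finset X → Prop)
    (hOrientable : ∀ S : Finset X, Orientable S ↔
      ∀ (γ : G) (h : ∀ x : X, x ∈ S ↔ γ • x ∈ S),
        Equiv.Perm.sign ((MulAction.toPerm γ).subtypePerm (p := fun x => x ∈ S)
          (fun x => (h x).symm)) = 1)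
    -- `𝒮` is a system of representatives of the `G`-orbits of `G`-orientable
    -- `g`-element subsets of `X`
    (𝒮 : Finset (Finset X))
    (h𝒮 : ∀ S ∈ 𝒮, S.card = g ∧ Orientable S)
    (hreps : ∀ S : Finset X, S.card = g → Orientable S →
      ∃! S' : Finset X, S' ∈ 𝒮 ∧ ∃ γ : G, γ • (S : Set X) = (S' : Set X))
    -- the action of `γ ∈ G` on the exterior algebra of `ℚ X`
    (T : G → (ExteriorAlgebra ℚ (X →₀ ℚ) →ₐ[ℚ] ExteriorAlgebra ℚ (X →₀ ℚ)))
    (hT : ∀ γ : G, T γ = ExteriorAlgebra.map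
      (Finsupp.lmapDomain ℚ ℚ (fun x : X => γ • x)))
    -- for each `S ∈ 𝒮`, `σ S` is the invariant vector attached to `S`: the sum over a
    -- system of coset representatives `Γ` of `G ⧸ G_S` of `γ · (s 1 ∧ ⋯ ∧ s g)`, where
    -- `s` is a numbering of `S`
    (σ : 𝒮 → ExteriorAlgebra ℚ (X →₀ ℚ))
    (hσ : ∀ S : 𝒮, ∃ s : Fin g → X, Function.Injective s ∧ (∀ i, s i ∈ S.1) ∧
      ∃ Γ : Finset G,
        (∀ γ : G, ∃! δ : G, δ ∈ Γ ∧
          (QuotientGroup.mk δ : G ⧸ MulAction.stabilizer G (S.1 : Set X)) =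
            QuotientGroup.mk γ) ∧
        σ S = ∑ γ ∈ Γ, T γ (ExteriorAlgebra.ιMulti ℚ g (fun i => Finsupp.single (s i) 1))) :
    -- conclusion: the `σ S` are linearly independent and span exactly the `G`-invariant
    -- elements of the `g`-th exterior power of `ℚ X`
    LinearIndependent ℚ σ ∧
      (Submodule.span ℚ (Set.range σ) : Set (ExteriorAlgebra ℚ (X →₀ ℚ))) =
        {x : ExteriorAlgebra ℚ (X →₀ ℚ) |
          x ∈ ⋀[ℚ]^g (X →₀ ℚ) ∧ ∀ γ : G, T γ x = x} := by
  classical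
  letI : LinearOrder X := LinearOrder.lift' (Fintype.equivFin X) (Fintype.equivFin X).injective
  -- the representative subsets, as elements of the subtype of g-element subsets
  set SB : 𝒮 → {S : Finset X // S.card = g} :=
    fun S => ⟨S.1, (h𝒮 S.1 S.2).1⟩ with hSB
  -- rewrite σ in terms of ws
  have hσ' : ∀ S : 𝒮, ∃ s : Fin g → X, Function.Injective s ∧ (∀ i, s i ∈ S.1) ∧
      ∃ Γ : Finset G,
        (∀ γ : G, ∃! δ : G, δ ∈ Γ ∧
          (QuotientGroup.mk δ : G ⧸ MulAction.stabilizer G (S.1 : Set X)) =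
            QuotientGroup.mk γ) ∧
        σ S = ∑ γ ∈ Γ, ws ((fun x => γ • x) ∘ s) := by
    intro S
    obtain ⟨s, h1, h2, Γ, h3, h4⟩ := hσ S
    refine ⟨s, h1, h2, Γ, h3, ?_⟩
    rw [h4]
    refine Finset.sum_congr rfl fun γ _ => ?_
    rw [hT γ]
    exact map_ws _ s
  -- a single term of σ, evaluated by a coordinate functional
  have hws_term : ∀ (S' : {S : Finset X // S.card = g}) (γ : G) (s : Fin g → X),
      Function.Injective s → (∀ i, s i ∈ S'.1) →
      ∃ ε : ℚ, (ε = 1 ∨ ε = -1) ∧ ∀ Tg : {S : Finset X // S.card = g},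
        coordB Tg (ws ((fun x => γ • x) ∘ s)) = if smulS γ S' = Tg then ε else 0 := by
    intro S' γ s hsInj hsMem
    have hinj : Function.Injective ((fun x : X => γ • x) ∘ s) :=
      (MulAction.injective γ).comp hsInj
    have hmem : ∀ i, ((fun x : X => γ • x) ∘ s) i ∈ (smulS γ S').1 :=
      fun i => Finset.smul_mem_smul_finset (hsMem i)
    obtain ⟨u, hu⟩ := ws_eq_sign_smul _ hinj (smulS γ S') hmem
    refine ⟨((u : ℤ) : ℚ), by rcases Int.units_eq_one_or u with h | h <;> simp [h], fun Tg => ?_⟩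
    rw [hu]
    rcases Int.units_eq_one_or u with h | h <;>
      simp only [h, one_smul, Units.neg_smul, map_neg, coordB_eB] <;>
      split_ifs <;> norm_num
  -- orbit separation: coordinates of σ S' at representatives of other orbits vanish
  have horb : ∀ (S S' : 𝒮) (γ : G), smulS γ (SB S') = SB S → S = S' := by
    intro S S' γ hβ
    have hset : γ • (S'.1 : Set X) = (S.1 : Set X) := by
      rw [← Finset.coe_smul_finset]
      exact congrArg _ (congrArg Subtype.val hβ)
    obtain ⟨Z, _, hZuniq⟩ := hreps S'.1 (h𝒮 S'.1 S'.2).1 (h𝒮 S'.1 S'.2).2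
    have h1 : S.1 = Z := hZuniq S.1 ⟨S.2, γ, hset⟩
    have h2 : S'.1 = Z := hZuniq S'.1 ⟨S'.2, 1, by rw [one_smul]⟩
    exact Subtype.ext (h1.trans h2.symm)
  -- evaluation of coordinate functionals on the σ's
  have hσ_coord : ∀ S S' : 𝒮, S ≠ S' → coordB (SB S) (σ S') = 0 := by
    intro S S' hne
    obtain ⟨s, hsInj, hsMem, Γ, hΓ, hsum⟩ := hσ' S'
    rw [hsum, map_sum]
    refine Finset.sum_eq_zero fun γ _ => ?_
    obtain ⟨ε, -, hε⟩ := hws_term (SB S') γ s hsInj hsMem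
    rw [hε (SB S), if_neg]
    intro hc
    exact hne (horb S S' γ hc)
  have hσ_diag : ∀ S : 𝒮, ∃ ε : ℚ, (ε = 1 ∨ ε = -1) ∧ coordB (SB S) (σ S) = ε := by
    intro S
    obtain ⟨s, hsInj, hsMem, Γ, hΓ, hsum⟩ := hσ' S
    obtain ⟨δ₀, ⟨hδ₀Γ, hδ₀c⟩, hδ₀u⟩ := hΓ 1
    have hδ₀stab : δ₀ ∈ MulAction.stabilizer G (S.1 : Set X) := by
      have h1 := QuotientGroup.eq.mp hδ₀c
      rw [mul_one] at h1
      exact inv_mem_iff.mp h1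
    have hδ₀fix : smulS δ₀ (SB S) = SB S := by
      apply Subtype.ext
      show δ₀ • (S.1 : Finset X) = S.1
      apply Finset.coe_injective
      rw [Finset.coe_smul_finset]
      exact hδ₀stab
    obtain ⟨ε, hε1, hε⟩ := hws_term (SB S) δ₀ s hsInj hsMem
    refine ⟨ε, hε1, ?_⟩
    rw [hsum, map_sum]
    rw [Finset.sum_eq_single_of_mem δ₀ hδ₀Γ]
    · rw [hε (SB S), if_pos hδ₀fix]
    · intro γ hγΓ hγne
      obtain ⟨ε', -, hε'⟩ := hws_term (SB S) γ s hsInj hsMem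
      rw [hε' (SB S), if_neg]
      intro hc
      apply hγne
      have hγstab : γ ∈ MulAction.stabilizer G (S.1 : Set X) := by
        rw [MulAction.mem_stabilizer_iff, ← Finset.coe_smul_finset]
        exact congrArg _ (congrArg Subtype.val hc)
      refine hδ₀u γ ⟨hγΓ, ?_⟩
      rw [QuotientGroup.eq]
      simpa using (inv_mem_iff).mpr hγstab
  -- the σ's lie in the g-th exterior power
  have hσ_mem : ∀ S : 𝒮, σ S ∈ ⋀[ℚ]^g (X →₀ ℚ) := by
    intro S
    obtain ⟨s, -, -, Γ, -, hsum⟩ := hσ' S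
    rw [hsum]
    exact Submodule.sum_mem _ fun γ _ => ws_mem _
  -- the σ's are G-invariant
  have hσ_inv : ∀ (S : 𝒮) (γ : G), T γ (σ S) = σ S := by
    intro S γ
    obtain ⟨s, hsInj, hsMem, Γ, hΓ, hsum⟩ := hσ' S
    set r : G → G := fun γ' => (hΓ γ').choose with hr
    have hrmem : ∀ γ', r γ' ∈ Γ := fun γ' => (hΓ γ').choose_spec.1.1
    have hrc : ∀ γ', (QuotientGroup.mk (r γ') :
        G ⧸ MulAction.stabilizer G (S.1 : Set X)) = QuotientGroup.mk γ' :=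
      fun γ' => (hΓ γ').choose_spec.1.2
    have hru : ∀ γ' δ, δ ∈ Γ → (QuotientGroup.mk δ :
        G ⧸ MulAction.stabilizer G (S.1 : Set X)) = QuotientGroup.mk γ' → δ = r γ' :=
      fun γ' δ hδ hm => (hΓ γ').unique ⟨hδ, hm⟩ ⟨hrmem γ', hrc γ'⟩
    -- for any γ', ws of γ' • s equals ws of (r γ') • s, by orientability
    have hkey : ∀ γ' : G, ws ((fun x => γ' • x) ∘ s) = ws ((fun x => r γ' • x) ∘ s) := by
      intro γ'
      set h' : G := (r γ')⁻¹ * γ' with hh'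
      have hstab : h' ∈ MulAction.stabilizer G (S.1 : Set X) :=
        QuotientGroup.eq.mp (hrc γ')
      have hset : h' • (S.1 : Set X) = (S.1 : Set X) := hstab
      have hmem : ∀ x : X, x ∈ S.1 ↔ h' • x ∈ S.1 := by
        intro x
        constructor
        · intro hx
          have : h' • x ∈ h' • (S.1 : Set X) := Set.smul_mem_smul_set hx
          rw [hset] at this
          exact this
        · intro hx
          have : h' • x ∈ h' • (S.1 : Set X) := by rw [hset]; exact hx
          exact Set.smul_mem_smul_set_iff.mp this
      have hsign := (hOrientable S.1).mp (h𝒮 S.1 S.2).2 h' hmem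
      have hws : ws ((fun x => h' • x) ∘ s) = ws s := by
        rw [ws_stab S.1 (h𝒮 S.1 S.2).1 s hsInj hsMem h' hmem, hsign, one_smul]
      have hdec : γ' = r γ' * h' := by rw [hh', mul_inv_cancel_left]
      calc ws ((fun x => γ' • x) ∘ s)
          = ws ((fun x => r γ' • x) ∘ ((fun x => h' • x) ∘ s)) := by
            congr 1
            funext i
            simp only [Function.comp_apply, ← mul_smul, ← hdec]
        _ = ExteriorAlgebra.map (Finsupp.lmapDomain ℚ ℚ (fun x : X => r γ' • x))
              (ws ((fun x => h' • x) ∘ s)) := (map_ws _ _).symm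
        _ = ExteriorAlgebra.map (Finsupp.lmapDomain ℚ ℚ (fun x : X => r γ' • x)) (ws s) := by
            rw [hws]
        _ = ws ((fun x => r γ' • x) ∘ s) := map_ws _ _
    rw [hT γ, hsum, map_sum]
    have hterm : ∀ δ ∈ Γ,
        ExteriorAlgebra.map (Finsupp.lmapDomain ℚ ℚ (fun x : X => γ • x))
          (ws ((fun x => δ • x) ∘ s)) = ws ((fun x => r (γ * δ) • x) ∘ s) := by
      intro δ _
      rw [map_ws]
      rw [← hkey (γ * δ)]
      congr 1
      funext i
      simp only [Function.comp_apply, mul_smul]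
    rw [Finset.sum_congr rfl hterm]
    have hcancel : ∀ (a b : G), b ∈ Γ → r (a * r (a⁻¹ * b)) = b := by
      intro a b hb
      refine (hru _ b hb ?_).symm
      rw [QuotientGroup.eq]
      have hu := QuotientGroup.eq.mp (hrc (a⁻¹ * b))
      have hu' := inv_mem hu
      have hEq : b⁻¹ * (a * r (a⁻¹ * b)) = ((r (a⁻¹ * b))⁻¹ * (a⁻¹ * b))⁻¹ := by group
      rw [hEq]
      exact hu'
    refine Finset.sum_nbij' (fun δ => r (γ * δ)) (fun δ' => r (γ⁻¹ * δ')) ?_ ?_ ?_ ?_ ?_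
    · intro δ _; exact hrmem _
    · intro δ _; exact hrmem _
    · intro δ hδ
      have := hcancel γ⁻¹ δ hδ
      rwa [inv_inv] at this
    · intro δ' hδ'
      exact hcancel γ δ' hδ'
    · intro δ _; rfl
  -- linear independence
  have hLI : LinearIndependent ℚ σ := by
    rw [Fintype.linearIndependent_iff]
    intro c hc S₀
    have h1 := congrArg (coordB (SB S₀)) hc
    rw [map_sum, map_zero] at h1
    obtain ⟨ε, hε1, hε2⟩ := hσ_diag S₀
    have h2 : ∀ S : 𝒮, S ≠ S₀ → coordB (SB S₀) (c S • σ S) = 0 := by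
      intro S hS
      rw [map_smul, hσ_coord S₀ S (Ne.symm hS), smul_zero]
    rw [Fintype.sum_eq_single S₀ h2, map_smul, hε2, smul_eq_mul] at h1
    rcases hε1 with h | h <;> rw [h] at h1 <;> [simpa using h1; simpa using h1]
  -- span of the σ's is contained in the invariants
  have hfwd : ∀ x ∈ Submodule.span ℚ (Set.range σ),
      x ∈ ⋀[ℚ]^g (X →₀ ℚ) ∧ ∀ γ : G, T γ x = x := by
    intro x hx
    induction hx using Submodule.span_induction with
    | mem x hx =>
      obtain ⟨S, rfl⟩ := hx
      exact ⟨hσ_mem S, hσ_inv S⟩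
    | zero => exact ⟨Submodule.zero_mem _, fun γ => map_zero _⟩
    | add y z hy hz hy' hz' =>
      exact ⟨Submodule.add_mem _ hy'.1 hz'.1, fun γ => by
        rw [map_add, hy'.2 γ, hz'.2 γ]⟩
    | smul a y hy hy' =>
      exact ⟨Submodule.smul_mem _ a hy'.1, fun γ => by
        rw [map_smul, hy'.2 γ]⟩
  -- an invariant element of the exterior power whose coordinates vanish on 𝒮 is zero
  have hkill : ∀ y : ExteriorAlgebra ℚ (X →₀ ℚ), y ∈ ⋀[ℚ]^g (X →₀ ℚ) →
      (∀ γ : G, T γ y = y) → (∀ S : 𝒮, coordB (SB S) y = 0) → y = 0 := by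
    intro y hy hinv h0
    have hinv' : ∀ γ : G,
        ExteriorAlgebra.map (Finsupp.lmapDomain ℚ ℚ (fun x : X => γ • x)) y = y := by
      intro γ
      rw [← hT γ]
      exact hinv γ
    have hcoord : ∀ Tg : {S : Finset X // S.card = g}, coordB Tg y = 0 := by
      intro Tg
      by_cases hOr : Orientable Tg.1
      · obtain ⟨Z, ⟨hZ𝒮, γ, hγZ⟩, -⟩ := hreps Tg.1 Tg.2 hOr
        set ZB : {S : Finset X // S.card = g} := ⟨Z, (h𝒮 Z hZ𝒮).1⟩ with hZB
        have hZT : smulS γ⁻¹ ZB = Tg := by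
          apply Subtype.ext
          have hfin : γ • Tg.1 = Z := by
            apply Finset.coe_injective
            rw [Finset.coe_smul_finset, hγZ]
          show γ⁻¹ • Z = Tg.1
          rw [← hfin, inv_smul_smul]
        obtain ⟨ε, hε1, hε2⟩ := coordB_map γ ZB hy
        rw [hinv' γ] at hε2
        simp only [hZT] at hε2
        have h3 : coordB ZB y = 0 := h0 ⟨Z, hZ𝒮⟩
        rw [h3] at hε2
        have hεne : ε ≠ 0 := by rcases hε1 with h | h <;> rw [h] <;> norm_num
        exact (mul_eq_zero.mp hε2.symm).resolve_left hεne
      · rw [hOrientable] at hOr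
        push_neg at hOr
        obtain ⟨γ, hmem, hsign⟩ := hOr
        have hsign' : Equiv.Perm.sign ((MulAction.toPerm γ).subtypePerm (p := fun x => x ∈ Tg.1) (fun x => (hmem x).symm)) = -1 := by
          rcases Int.units_eq_one_or
            (Equiv.Perm.sign ((MulAction.toPerm γ).subtypePerm (p := fun x => x ∈ Tg.1) (fun x => (hmem x).symm))) with h | h
          · exact absurd h hsign
          · exact h
        have := coordB_map_stab γ Tg hmem hy
        rw [hinv', hsign'] at this
        have h4 : coordB Tg y = -coordB Tg y := by
          conv_lhs => rw [this]
          simp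
        linarith
    conv_lhs => rw [eq_sum_coordB hy]
    rw [Finset.sum_congr rfl fun Tg _ => by rw [hcoord Tg, zero_smul]]
    simp
  -- invariants are contained in the span
  have hbwd : ∀ x : ExteriorAlgebra ℚ (X →₀ ℚ), x ∈ ⋀[ℚ]^g (X →₀ ℚ) →
      (∀ γ : G, T γ x = x) → x ∈ Submodule.span ℚ (Set.range σ) := by
    intro x hx hinv
    set d : 𝒮 → ℚ := fun S => coordB (SB S) x / coordB (SB S) (σ S) with hd
    set y : ExteriorAlgebra ℚ (X →₀ ℚ) := x - ∑ S : 𝒮, d S • σ S with hy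
    have hymem : y ∈ ⋀[ℚ]^g (X →₀ ℚ) :=
      Submodule.sub_mem _ hx (Submodule.sum_mem _ fun S _ => Submodule.smul_mem _ _ (hσ_mem S))
    have hyinv : ∀ γ : G, T γ y = y := by
      intro γ
      rw [hy, map_sub, hinv γ, map_sum]
      congr 1
      refine Finset.sum_congr rfl fun S _ => ?_
      rw [map_smul, hσ_inv S γ]
    have hy0 : ∀ S : 𝒮, coordB (SB S) y = 0 := by
      intro S
      obtain ⟨ε, hε1, hε2⟩ := hσ_diag S
      have hεne : ε ≠ 0 := by rcases hε1 with h | h <;> rw [h] <;> norm_num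
      rw [hy, map_sub, map_sum]
      rw [Fintype.sum_eq_single S (fun S' hS' => by
        rw [map_smul, hσ_coord S S' (Ne.symm hS'), smul_zero])]
      rw [map_smul, smul_eq_mul]
      simp only [hd, hε2]
      field_simp
      ring
    have h0 := hkill y hymem hyinv hy0
    rw [hy, sub_eq_zero] at h0
    rw [h0]
    exact Submodule.sum_mem _ fun S _ =>
      Submodule.smul_mem _ _ (Submodule.subset_span ⟨S, rfl⟩)
  refine ⟨hLI, ?_⟩
  ext x
  simp only [SetLike.mem_coe, Set.mem_setOf_eq]
  exact ⟨hfwd x, fun h => hbwd x h.1 h.2⟩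
end

section
/- Let L be an integral lattice in a Euclidean space E such that the roots of L (vectors α ∈ L with α·α = 2) span E over ℝ. Then for any g ≥ 1, every alternating g-multilinear form ω : L^g → ℝ invariant under the orthogonal group O(L) is identically zero. -/
open Finset Function

/-- The reflection in a root `α` (with `⟪α,α⟫ = 2`), as a linear isometry equivalence. -/
private theorem statement2_exists_refl {E : Type*} [NormedAddCommGroup E]
    [InnerProductSpace ℝ E] (α : E) (h2 : (inner ℝ α α : ℝ) = 2) :
    ∃ f : E ≃ₗᵢ[ℝ] E, ∀ x : E, f x = x - (inner ℝ α x : ℝ) • α := by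
  set s : E →ₗ[ℝ] E :=
    { toFun := fun x => x - (inner ℝ α x : ℝ) • α
      map_add' := by
        intro x y
        rw [inner_add_right, add_smul]
        abel
      map_smul' := by
        intro c x
        rw [RingHom.id_apply, real_inner_smul_right, mul_smul, smul_sub] } with hs
  have hsa : ∀ x : E, s x = x - (inner ℝ α x : ℝ) • α := fun x => rfl
  have hinvol : Function.Involutive s := by
    intro x
    rw [hsa, hsa, inner_sub_right, real_inner_smul_right, h2]
    module
  have hinner : ∀ x y : E,
      (inner ℝ ((LinearEquiv.ofInvolutive s hinvol) x) ((LinearEquiv.ofInvolutive s hinvol) y) : ℝ)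
        = inner ℝ x y := by
    intro x y
    have hx : (LinearEquiv.ofInvolutive s hinvol) x = x - (inner ℝ α x : ℝ) • α := hsa x
    have hy : (LinearEquiv.ofInvolutive s hinvol) y = y - (inner ℝ α y : ℝ) • α := hsa y
    rw [hx, hy, inner_sub_left, inner_sub_right, inner_sub_right,
      real_inner_smul_left, real_inner_smul_left, real_inner_smul_right,
      real_inner_smul_right, h2, real_inner_comm y α, real_inner_comm α x]
    ring
  exact ⟨(LinearEquiv.ofInvolutive s hinvol).isometryOfInner hinner, fun x => hsa x⟩

set_option maxHeartbeats 1000000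

/-- Let `L` be an integral lattice in a Euclidean space `E` whose roots
(vectors `α ∈ L` with `α·α = 2`) span `E` over `ℝ`.  Then every alternating
`g`-multilinear form `ω : L^g → ℝ` (`g ≥ 1`) invariant under the orthogonal group
`O(L)` of `L` is identically zero. -/
theorem statement2 {E : Type*} [NormedAddCommGroup E] [InnerProductSpace ℝ E]
    [FiniteDimensional ℝ E]
    (L : Submodule ℤ E)
    -- `L` is integral: all inner ℝ products of lattice vectors are integers
    (hint : ∀ x ∈ L, ∀ y ∈ L, ∃ n : ℤ, (inner ℝ x y : ℝ) = n)
    -- the roots of `L` span `E` over `ℝ`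
    (hroots : Submodule.span ℝ {α : E | α ∈ L ∧ (inner ℝ α α : ℝ) = 2} = ⊤)
    {g : ℕ} (hg : 1 ≤ g)
    (ω : L [⋀^Fin g]→ₗ[ℤ] ℝ)
    -- `ω` is invariant under every isometry of `E` preserving `L`
    (hinv : ∀ (f : E ≃ₗᵢ[ℝ] E) (hf : ∀ x : E, x ∈ L ↔ f x ∈ L) (v : Fin g → L),
      ω (fun i => (⟨f (v i), (hf (v i)).mp (v i).2⟩ : L)) = ω v) :
    ω = 0 := by
  classical
  set R : Set E := {α : E | α ∈ L ∧ (inner ℝ α α : ℝ) = 2} with hRdef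
  set i0 : Fin g := ⟨0, hg⟩ with hi0
  -- Key step 1: ω vanishes whenever slot i0 is a root.
  have key1 : ∀ (α : E) (hα : α ∈ L) (h2 : (inner ℝ α α : ℝ) = 2) (v : Fin g → L),
      ω (Function.update v i0 ⟨α, hα⟩) = 0 := by
    intro α hα h2 v
    obtain ⟨f, hf⟩ := statement2_exists_refl α h2
    have hff : ∀ x : E, f (f x) = x := by
      intro x
      rw [hf, hf, inner_sub_right, real_inner_smul_right, h2]
      module
    have hfwd : ∀ x ∈ L, f x ∈ L := by
      intro x hx
      obtain ⟨n, hn⟩ := hint α hα x hx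
      have hfx : f x = x - n • α := by
        rw [hf, hn, Int.cast_smul_eq_zsmul ℝ n α]
      rw [hfx]
      exact sub_mem hx (Submodule.smul_mem L n hα)
    have hfL : ∀ x : E, x ∈ L ↔ f x ∈ L := by
      intro x
      refine ⟨hfwd x, fun h => ?_⟩
      have := hfwd (f x) h
      rwa [hff] at this
    -- integer inner ℝ products with α
    set m : Fin g → ℤ := fun i => Classical.choose (hint α hα (v i) (v i).2) with hm
    have hms : ∀ i, (inner ℝ α ((v i : E)) : ℝ) = m i := fun i =>
      Classical.choose_spec (hint α hα (v i) (v i).2)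
    -- the vectors w i = 2 v i - m i • α, orthogonal to α
    have hwEL : ∀ i, (v i : E) + (v i : E) - (m i : ℝ) • α ∈ L := by
      intro i
      rw [Int.cast_smul_eq_zsmul ℝ (m i) α]
      exact sub_mem (add_mem (v i).2 (v i).2) (Submodule.smul_mem L (m i) hα)
    set w : Fin g → L := fun i => ⟨(v i : E) + (v i : E) - (m i : ℝ) • α, hwEL i⟩ with hw
    have hworth : ∀ i, (inner ℝ α ((w i : E)) : ℝ) = 0 := by
      intro i
      show (inner ℝ α ((v i : E) + (v i : E) - (m i : ℝ) • α) : ℝ) = 0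
      rw [inner_sub_right, inner_add_right, real_inner_smul_right, h2, hms i]
      ring
    have hfixw : ∀ i, f ((w i : E)) = (w i : E) := by
      intro i
      rw [hf, hworth i, zero_smul, sub_zero]
    have hfα : f α = -α := by
      rw [hf, h2, two_smul]
      abel
    set αL : L := ⟨α, hα⟩ with hαL
    set u : Fin g → L := Function.update w i0 αL with hu
    -- Claim B : ω u = 0 using the reflection f.
    have claimB : ω u = 0 := by
      have hI := hinv f hfL u
      have htup : (fun i => (⟨f ((u i : E)), (hfL (u i)).mp (u i).2⟩ : L))
          = Function.update u i0 (-αL) := by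
        funext i
        by_cases hi : i = i0
        · apply Subtype.ext
          show f ((u i : E)) = ((Function.update u i0 (-αL) i : L) : E)
          rw [hi, Function.update_self]
          have hui0 : u i0 = αL := by rw [hu, Function.update_self]
          rw [hui0]
          show f α = ((-αL : L) : E)
          rw [hfα]
          simp [hαL]
        · apply Subtype.ext
          show f ((u i : E)) = ((Function.update u i0 (-αL) i : L) : E)
          rw [Function.update_of_ne hi]
          have h1 : u i = w i := by rw [hu, Function.update_of_ne hi]
          rw [h1]
          exact hfixw i
      rw [htup] at hI
      rw [AlternatingMap.map_update_neg] at hI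
      have e2 : Function.update u i0 αL = u := by rw [hu, Function.update_idem]
      rw [e2] at hI
      linarith
    -- Claim A : ω u = 2^(g-1) • ω (update v i0 αL); more precisely an induction over slots.
    have claimA : ∀ s : Finset (Fin g), i0 ∉ s →
        ω (fun i => if i ∈ s then w i else Function.update v i0 αL i)
          = (2 ^ s.card : ℤ) • ω (Function.update v i0 αL) := by
      intro s
      induction s using Finset.induction_on with
      | empty =>
        intro _
        simp only [Finset.notMem_empty, if_false, Finset.card_empty, pow_zero, one_smul]
      | @insert j s hjs ih =>
        intro hins
        have hji0 : j ≠ i0 := fun h => hins (h ▸ Finset.mem_insert_self j s)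
        have hi0s : i0 ∉ s := fun h => hins (Finset.mem_insert_of_mem h)
        set base : Fin g → L := fun i => if i ∈ s then w i else Function.update v i0 αL i
          with hbase
        have hstep : (fun i => if i ∈ insert j s then w i else Function.update v i0 αL i)
            = Function.update base j (w j) := by
          funext i
          by_cases hij : i = j
          · subst hij
            simp [Function.update_self, Finset.mem_insert_self]
          · simp only [Function.update_of_ne hij, hbase, Finset.mem_insert]
            by_cases his : i ∈ s <;> simp [his, hij]
        have hbj : base j = v j := by
          simp only [hbase, hjs, if_false, Function.update_of_ne hji0]
        have hb0 : base i0 = αL := by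
          simp only [hbase, hi0s, if_false, Function.update_self]
        have hwj : w j = v j + v j - m j • αL := by
          apply Subtype.ext
          show ((v j : E) + (v j : E) - (m j : ℝ) • α)
            = ((v j : E) + (v j : E)) - (m j • αL : L)
          rw [Int.cast_smul_eq_zsmul ℝ (m j) α]
          rfl
        have hzero : ω (Function.update base j αL) = 0 := by
          apply ω.map_eq_zero_of_eq _ (i := j) (j := i0)
          · rw [Function.update_self, Function.update_of_ne (Ne.symm hji0), hb0]
          · exact hji0
        rw [hstep, hwj, AlternatingMap.map_update_sub, AlternatingMap.map_update_add,
          AlternatingMap.map_update_smul, hzero, smul_zero, sub_zero,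
          ← hbj, Function.update_eq_self, ih hi0s,
          Finset.card_insert_of_notMem hjs]
        simp only [pow_succ, zsmul_eq_mul]
        push_cast
        ring
    have huni : u = fun i => if i ∈ Finset.univ.erase i0 then w i
        else Function.update v i0 αL i := by
      funext i
      by_cases hi : i = i0
      · subst hi
        simp [hu]
      · simp [hu, Function.update_of_ne hi, hi]
    have hA := claimA (Finset.univ.erase i0) (Finset.notMem_erase i0 _)
    rw [← huni, claimB] at hA
    have h2g : ((2 : ℤ) ^ (Finset.univ.erase i0).card : ℤ) ≠ 0 := by positivity
    have := hA.symm
    rw [zsmul_eq_mul] at this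
    have := mul_eq_zero.mp this
    rcases this with h | h
    · exact absurd (by exact_mod_cast h) h2g
    · exact h
  -- Step 2: a basis of E made of roots
  have htop : ⊤ ≤ Submodule.span ℝ R := hroots.ge
  set B := Module.Basis.ofSpan htop with hB
  haveI : Fintype ((linearIndepOn_empty ℝ id).extend (Set.empty_subset R)) :=
    FiniteDimensional.fintypeBasisIndex B
  have hBR : ∀ i, (B i : E) ∈ R := fun i =>
    Module.Basis.ofSpan_subset htop (Set.mem_range_self i)
  have hBL : ∀ i, (B i : E) ∈ L := fun i => (hBR i).1
  have hB2 : ∀ i, (inner ℝ (B i) (B i) : ℝ) = 2 := fun i => (hBR i).2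
  -- Gram matrix
  set G : Matrix _ _ ℤ := fun i j => Classical.choose (hint (B i) (hBL i) (B j) (hBL j)) with hG
  have hGs : ∀ i j, (inner ℝ (B i) (B j) : ℝ) = G i j := fun i j =>
    Classical.choose_spec (hint (B i) (hBL i) (B j) (hBL j))
  set Gr : Matrix _ _ ℝ := (Int.castRingHom ℝ).mapMatrix G with hGr
  have hGrdet : Gr.det ≠ 0 := by
    intro hdet
    obtain ⟨c, hc0, hcv⟩ := Matrix.exists_mulVec_eq_zero_iff.mpr hdet
    set y : E := ∑ j, c j • B j with hy
    have hyB : ∀ i, (inner ℝ (B i) y : ℝ) = 0 := by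
      intro i
      rw [hy, inner_sum]
      have : ∀ j, (inner ℝ (B i) (c j • B j) : ℝ) = Gr i j * c j := by
        intro j
        rw [real_inner_smul_right, hGs i j, hGr]
        simp only [RingHom.mapMatrix_apply, Matrix.map_apply, Int.coe_castRingHom]
        push_cast
        ring
      rw [Finset.sum_congr rfl (fun j _ => this j)]
      have := congrFun hcv i
      simpa [Matrix.mulVec, dotProduct] using this
    have hy0 : y = 0 := by
      have : (inner ℝ y y : ℝ) = 0 := by
        rw [hy, sum_inner]
        refine Finset.sum_eq_zero fun j _ => ?_
        rw [real_inner_smul_left, ← hy, hyB j, mul_zero]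
      exact inner_self_eq_zero.mp this
    have := Fintype.linearIndependent_iff.mp B.linearIndependent c (by rw [← hy, hy0])
    exact hc0 (funext this)
  -- For any lattice vector, an integer multiple lies in the ℤ-span of the basis roots
  have key2 : ∀ x : L, ∃ d : ℤ, d ≠ 0 ∧ ∃ n : _ → ℤ,
      (d • x : L) = ∑ i, n i • (⟨B i, hBL i⟩ : L) := by
    intro x
    set t : _ → ℤ := fun i => Classical.choose (hint (B i) (hBL i) x x.2) with ht
    have hts : ∀ i, (inner ℝ (B i) ((x : L) : E) : ℝ) = t i := fun i =>
      Classical.choose_spec (hint (B i) (hBL i) x x.2)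
    set c : _ → ℝ := fun i => B.repr x i with hc
    have hGc : Gr.mulVec c = fun i => (t i : ℝ) := by
      funext i
      have hx : ∑ j, c j • B j = (x : E) := B.sum_repr x
      rw [← hts i, ← hx, inner_sum]
      simp only [Matrix.mulVec, dotProduct]
      refine Finset.sum_congr rfl fun j _ => ?_
      rw [real_inner_smul_right, hGs i j, hGr]
      simp only [RingHom.mapMatrix_apply, Matrix.map_apply, Int.coe_castRingHom]
      push_cast
      ring
    refine ⟨G.det, ?_, G.adjugate.mulVec t, ?_⟩
    · intro h
      apply hGrdet
      rw [hGr, ← RingHom.map_det (Int.castRingHom ℝ) G, h]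
      exact map_zero _

    · have hcram : ∀ i, (G.det : ℝ) * c i = ((G.adjugate.mulVec t) i : ℝ) := by
        intro i
        have h1 : Gr.adjugate.mulVec (Gr.mulVec c) = Gr.det • c := by
          rw [Matrix.mulVec_mulVec, Matrix.adjugate_mul, Matrix.smul_mulVec,
            Matrix.one_mulVec]
        have h2 : Gr.adjugate.mulVec (fun j => (t j : ℝ)) i
            = ((G.adjugate.mulVec t) i : ℝ) := by
          rw [hGr, ← RingHom.map_adjugate (Int.castRingHom ℝ) G]
          simp only [Matrix.mulVec, dotProduct, RingHom.mapMatrix_apply,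
            Matrix.map_apply, Int.coe_castRingHom]
          push_cast
          rfl
        have h3 : Gr.det = (G.det : ℝ) := by
          rw [hGr, ← RingHom.map_det (Int.castRingHom ℝ) G]; rfl
        rw [← h2, ← hGc, h1, h3, Pi.smul_apply, smul_eq_mul]
      apply Subtype.ext
      have hcoe : ((∑ i, (G.adjugate.mulVec t) i • (⟨B i, hBL i⟩ : L) : L) : E)
          = ∑ i, ((G.adjugate.mulVec t) i : ℝ) • B i := by
        rw [Submodule.coe_sum]
        refine Finset.sum_congr rfl fun i _ => ?_
        rw [Int.cast_smul_eq_zsmul ℝ]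
        rfl
      rw [hcoe]
      show (G.det : ℤ) • (x : E) = _
      rw [← Int.cast_smul_eq_zsmul ℝ G.det ((x : L) : E), ← B.sum_repr (x : E), Finset.smul_sum]
      refine Finset.sum_congr rfl fun i _ => ?_
      rw [smul_smul, hcram i]
  -- Step 3: conclusion
  ext v
  obtain ⟨d, hd, n, hdn⟩ := key2 (v i0)
  have h1 : d • ω v = ω (Function.update v i0 (d • v i0)) := by
    rw [AlternatingMap.map_update_smul, Function.update_eq_self]
  have h2 : ω (Function.update v i0 (d • v i0)) = 0 := by
    rw [hdn]
    rw [ω.map_update_sum Finset.univ i0 (fun i => n i • (⟨B i, hBL i⟩ : L)) v]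
    refine Finset.sum_eq_zero fun i _ => ?_
    show ω (Function.update v i0 (n i • (⟨B i, hBL i⟩ : L))) = 0
    rw [AlternatingMap.map_update_smul, key1 (B i) (hBL i) (hB2 i) v, smul_zero]
  rw [h2] at h1
  have := smul_eq_zero.mp h1
  rcases this with h | h
  · exact absurd h hd
  · simpa using h
end

section
/- Any 4-element subset (tetrad) T of the 24-point set Ω is contained in exactly 5 octads of the extended binary Golay code. Consequently, the complement of T is the disjoint union of 5 tetrads T_1, …, T_5 uniquely determined by the property that T ∪ T_i is an octad for each i. -/
open scoped symmDiff Classical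

lemma card_symmDiff_aux {α : Type*} [DecidableEq α] (s t : Finset α) :
    (s ∆ t).card + 2 * (s ∩ t).card = s.card + t.card := by
  have h : s ∆ t = (s \ t) ∪ (t \ s) := by
    ext x; simp [Finset.mem_symmDiff]
  have hd : Disjoint (s \ t) (t \ s) := by
    simp only [Finset.disjoint_left, Finset.mem_sdiff]; tauto
  rw [h, Finset.card_union_of_disjoint hd]
  have h1 := Finset.card_sdiff_add_card_inter s t
  have h2 := Finset.card_sdiff_add_card_inter t s
  rw [Finset.inter_comm] at h2
  omega

structure GolayCode (Ω : Type*) [Fintype Ω] [DecidableEq Ω] : Type _ where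
  carrier : Finset (Finset Ω)
  card_omega : Fintype.card Ω = 24
  empty_mem : ∅ ∈ carrier
  symmDiff_mem : ∀ C ∈ carrier, ∀ D ∈ carrier, C ∆ D ∈ carrier
  card_carrier : carrier.card = 4096
  weight_mem : ∀ C ∈ carrier, C.card ∈ ({0, 8, 12, 16, 24} : Set ℕ)
  steiner : ∀ S : Finset Ω, S.card = 5 →
    ∃! O : Finset Ω, O ∈ carrier ∧ O.card = 8 ∧ S ⊆ O

/-- Any tetrad (4-element subset) `T` of `Ω` is contained in exactly 5
octads of the extended binary Golay code; consequently, the complement of `T` is the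
disjoint union of the 5 tetrads `O \ T` for `O` an octad containing `T`, and these are
the unique tetrads `T'` disjoint from `T` with `T ∪ T'` an octad. -/
theorem statement3 {Ω : Type*} [Fintype Ω] [DecidableEq Ω] (G : GolayCode Ω)
    (T : Finset Ω) (hT : T.card = 4) :
    ((G.carrier.filter (fun O => O.card = 8 ∧ T ⊆ O)).card = 5) ∧
    (∀ O ∈ G.carrier, O.card = 8 → T ⊆ O → (O \ T).card = 4) ∧
    (∀ O ∈ G.carrier, ∀ O' ∈ G.carrier, O.card = 8 → O'.card = 8 → T ⊆ O → T ⊆ O' →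
      O ≠ O' → Disjoint (O \ T) (O' \ T)) ∧
    ((G.carrier.filter (fun O => O.card = 8 ∧ T ⊆ O)).biUnion (fun O => O \ T) = Tᶜ) ∧
    (∀ T' : Finset Ω, T'.card = 4 → Disjoint T T' →
      (T ∪ T' ∈ G.carrier ↔ ∃ O ∈ G.carrier, O.card = 8 ∧ T ⊆ O ∧ T' = O \ T)) := by
  classical
  -- size of O \ T
  have hsdiff : ∀ O ∈ G.carrier, O.card = 8 → T ⊆ O → (O \ T).card = 4 := by
    intro O _ h8 hTO
    have := Finset.card_sdiff_add_card_eq_card hTO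
    omega
  -- intersection of two distinct octads containing T is T
  have hinter : ∀ O ∈ G.carrier, ∀ O' ∈ G.carrier, O.card = 8 → O'.card = 8 →
      T ⊆ O → T ⊆ O' → O ≠ O' → O ∩ O' = T := by
    intro O hO O' hO' h8 h8' hTO hTO' hne
    have hmem := G.symmDiff_mem O hO O' hO'
    have hw := G.weight_mem _ hmem
    simp only [Set.mem_insert_iff, Set.mem_singleton_iff] at hw
    have hsd := card_symmDiff_aux O O'
    have hne0 : (O ∆ O').card ≠ 0 := by
      rw [Finset.card_ne_zero]
      exact Finset.symmDiff_nonempty.2 hne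
    have hTsub : T ⊆ O ∩ O' := Finset.subset_inter hTO hTO'
    have hle : 4 ≤ (O ∩ O').card := hT ▸ Finset.card_le_card hTsub
    have hk : (O ∩ O').card = 4 := by omega
    exact (Finset.eq_of_subset_of_card_le hTsub (by omega)).symm
  -- disjointness
  have hdisj : ∀ O ∈ G.carrier, ∀ O' ∈ G.carrier, O.card = 8 → O'.card = 8 → T ⊆ O →
      T ⊆ O' → O ≠ O' → Disjoint (O \ T) (O' \ T) := by
    intro O hO O' hO' h8 h8' hTO hTO' hne
    have h := hinter O hO O' hO' h8 h8' hTO hTO' hne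
    rw [Finset.disjoint_left]
    intro x hx hx'
    simp only [Finset.mem_sdiff] at hx hx'
    have : x ∈ O ∩ O' := Finset.mem_inter.2 ⟨hx.1, hx'.1⟩
    rw [h] at this
    exact hx.2 this
  -- biUnion = Tᶜ
  set F := G.carrier.filter (fun O => O.card = 8 ∧ T ⊆ O) with hF
  have hbi : F.biUnion (fun O => O \ T) = Tᶜ := by
    ext x
    simp only [Finset.mem_biUnion, Finset.mem_compl, hF, Finset.mem_filter,
      Finset.mem_sdiff]
    constructor
    · rintro ⟨O, -, -, hx⟩; exact hx
    · intro hx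
      have hcard : (insert x T).card = 5 := by
        rw [Finset.card_insert_of_notMem hx, hT]
      obtain ⟨O, ⟨hO, h8, hsub⟩, -⟩ := G.steiner (insert x T) hcard
      refine ⟨O, ⟨hO, h8, ?_⟩, hsub (Finset.mem_insert_self x T), hx⟩
      exact (Finset.insert_subset_iff.1 hsub).2
  -- counting
  have hcount : F.card = 5 := by
    have hdisjF : ∀ O ∈ F, ∀ O' ∈ F, O ≠ O' → Disjoint (O \ T) (O' \ T) := by
      intro O hO O' hO' hne
      simp only [hF, Finset.mem_filter] at hO hO'
      exact hdisj O hO.1 O' hO'.1 hO.2.1 hO'.2.1 hO.2.2 hO'.2.2 hne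
    have hcb := Finset.card_biUnion hdisjF
    rw [hbi, Finset.card_compl, hT, G.card_omega] at hcb
    have hsum : ∑ O ∈ F, (O \ T).card = ∑ O ∈ F, 4 := by
      refine Finset.sum_congr rfl fun O hO => ?_
      simp only [hF, Finset.mem_filter] at hO
      exact hsdiff O hO.1 hO.2.1 hO.2.2
    rw [hsum, Finset.sum_const, smul_eq_mul] at hcb
    omega
  refine ⟨hcount, hsdiff, hdisj, hbi, ?_⟩
  intro T' hT' hdisjT
  constructor
  · intro hmem
    refine ⟨T ∪ T', hmem, ?_, Finset.subset_union_left, ?_⟩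
    · rw [Finset.card_union_of_disjoint hdisjT, hT, hT']
    · rw [Finset.union_sdiff_cancel_left hdisjT]
  · rintro ⟨O, hO, h8, hTO, rfl⟩
    have : T ∪ O \ T = O := Finset.union_sdiff_of_subset hTO
    rw [this]; exact hO
end

section
/- Let γ ∈ M₂₄ be an element of order 5 whose fixed-point set on Ω is a tetrad T. Then the 5 octads containing T are permuted transitively (hence cyclically) by γ, and each of these octads intersects each 5-cycle orbit of γ in exactly one point. -/
open scoped symmDiff Classical

/-- A permutation of `Ω` belongs to the Mathieu group `M₂₄` iff it preserves the code. -/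
def GolayCode.IsM24 {Ω : Type*} [Fintype Ω] [DecidableEq Ω] (G : GolayCode Ω)
    (σ : Equiv.Perm Ω) : Prop :=
  ∀ C : Finset Ω, C ∈ G.carrier ↔ C.image σ ∈ G.carrier

/-- Let `γ ∈ M₂₄` have order 5, with fixed-point set a tetrad `T`.  Then
the 5 octads containing `T` are permuted transitively (hence cyclically) by `γ`, and
each such octad meets each 5-cycle orbit of `γ` in exactly one point. -/
theorem statement4 {Ω : Type*} [Fintype Ω] [DecidableEq Ω] (G : GolayCode Ω)
    (γ : Equiv.Perm Ω) (hγ : G.IsM24 γ) (hord : orderOf γ = 5)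
    (T : Finset Ω) (hTfix : ∀ x : Ω, γ x = x ↔ x ∈ T) (hT : T.card = 4) :
    -- transitivity of `γ` on the 5 octads containing `T`
    (∀ O ∈ G.carrier, ∀ O' ∈ G.carrier, O.card = 8 → O'.card = 8 → T ⊆ O → T ⊆ O' →
      ∃ k : ℕ, O' = O.image (γ ^ k)) ∧
    -- each octad containing `T` meets each orbit of `γ` outside `T` in one point
    (∀ O ∈ G.carrier, O.card = 8 → T ⊆ O → ∀ x : Ω, x ∉ T →
      (O ∩ Finset.univ.filter (fun y => ∃ k : ℕ, (γ ^ k) x = y)).card = 1) := by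
  classical
  have hγ5 : γ ^ 5 = 1 := by rw [← hord]; exact pow_orderOf_eq_one γ
  have hpow5 : ∀ d : ℕ, 5 ∣ d → γ ^ d = 1 := by
    rintro d ⟨c, rfl⟩
    rw [pow_mul, hγ5, one_pow]
  have hred : ∀ k : ℕ, γ ^ k = γ ^ (k % 5) := by
    intro k
    conv_lhs => rw [← Nat.div_add_mod k 5]
    rw [pow_add, hpow5 (5 * (k / 5)) ⟨k / 5, rfl⟩, one_mul]
  -- powers of γ fix T pointwise
  have hfixT : ∀ (k : ℕ) (t : Ω), t ∈ T → (γ ^ k) t = t := by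
    intro k t ht
    induction k with
    | zero => simp
    | succ n ih => rw [pow_succ, Equiv.Perm.mul_apply, (hTfix t).mpr ht, ih]
  -- if a power of γ sends x into T, then x ∈ T
  have hnotT : ∀ (x : Ω) (k : ℕ), (γ ^ k) x ∈ T → x ∈ T := by
    intro x k hk
    have h1 : γ ((γ ^ k) x) = (γ ^ k) x := (hTfix _).mpr hk
    have h2 : (γ ^ k) (γ x) = γ ((γ ^ k) x) := by
      rw [← Equiv.Perm.mul_apply, ← Equiv.Perm.mul_apply, ← pow_succ, ← pow_succ']
    exact (hTfix x).mp ((γ ^ k).injective (h2.trans h1))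
  -- a nontrivial power of γ fixes only points of T
  have hfix_only : ∀ (j : ℕ), ¬ (5 ∣ j) → ∀ x : Ω, (γ ^ j) x = x → x ∈ T := by
    intro j hj x hx
    have h1 : ∀ m : ℕ, (γ ^ (j * m)) x = x := by
      intro m
      induction m with
      | zero => simp
      | succ n ih => rw [Nat.mul_succ, pow_add, Equiv.Perm.mul_apply, hx, ih]
    have h2 : (γ ^ (j * j ^ 3)) x = x := h1 _
    haveI : Fact (Nat.Prime 5) := ⟨by norm_num⟩
    have hp : (j : ZMod 5) ≠ 0 := by
      rw [Ne, ZMod.natCast_eq_zero_iff]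
      exact hj
    have hf : ((j ^ 4 : ℕ) : ZMod 5) = ((1 : ℕ) : ZMod 5) := by
      push_cast
      exact ZMod.pow_card_sub_one_eq_one hp
    have hmod : j ^ 4 % 5 = 1 := by
      have := (ZMod.natCast_eq_natCast_iff _ _ _).mp hf
      simpa [Nat.ModEq] using this
    have hj4 : j * j ^ 3 = j ^ 4 := by ring
    have hpow : γ ^ (j ^ 4) = γ := by
      rw [hred (j ^ 4), hmod, pow_one]
    rw [hj4, hpow] at h2
    exact (hTfix x).mp h2
  have hnd5 : ∀ j m : ℕ, ¬ (5 ∣ j) → 0 < m → m < 5 → ¬ (5 ∣ (j * m)) := by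
    intro j m hj hm1 hm2 h
    rcases (Nat.Prime.dvd_mul (by norm_num)).mp h with h | h
    · exact hj h
    · omega
  -- distinctness of orbit points
  have hinj : ∀ x : Ω, x ∉ T → ∀ a d : ℕ, ¬ (5 ∣ d) → (γ ^ a) x ≠ (γ ^ (a + d)) x := by
    intro x hx a d hd h
    rw [pow_add, Equiv.Perm.mul_apply] at h
    exact hx (hfix_only d hd x ((γ ^ a).injective h).symm)
  -- octads containing T
  set Oct : Finset Ω → Prop := fun O => O ∈ G.carrier ∧ O.card = 8 ∧ T ⊆ O with hOctdef
  -- image of such an octad under a power of γ is one too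
  have himage : ∀ (k : ℕ) (O : Finset Ω), Oct O → Oct (O.image (γ ^ k)) := by
    intro k O hO
    obtain ⟨h1, h2, h3⟩ := hO
    refine ⟨?_, ?_, ?_⟩
    · induction k with
      | zero => simpa using h1
      | succ n ih =>
        have : O.image ⇑(γ ^ (n + 1)) = (O.image ⇑(γ ^ n)).image ⇑γ := by
          rw [Finset.image_image, pow_succ']
          rfl
        rw [this]
        exact (hγ _).mp ih
    · rw [Finset.card_image_of_injective _ (γ ^ k).injective]; exact h2
    · intro t ht
      exact Finset.mem_image.mpr ⟨t, h3 ht, hfixT k t ht⟩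
  -- two octads containing T sharing a point outside T are equal
  have huniq : ∀ x : Ω, x ∉ T → ∀ O O' : Finset Ω, Oct O → Oct O' →
      x ∈ O → x ∈ O' → O = O' := by
    intro x hx O O' hO hO' hxO hxO'
    have hS : (insert x T).card = 5 := by
      rw [Finset.card_insert_of_notMem hx, hT]
    obtain ⟨W, _, hWu⟩ := G.steiner (insert x T) hS
    have e1 : O = W := hWu O ⟨hO.1, hO.2.1, Finset.insert_subset hxO hO.2.2⟩
    have e2 : O' = W := hWu O' ⟨hO'.1, hO'.2.1, Finset.insert_subset hxO' hO'.2.2⟩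
    rw [e1, e2]
  -- key: an octad containing T contains no two distinct points of one orbit
  have hkey : ∀ O : Finset Ω, Oct O → ∀ y ∈ O, y ∉ T → ∀ j : ℕ, ¬ (5 ∣ j) →
      (γ ^ j) y ∉ O := by
    intro O hO y hyO hyT j hj hc
    have hO2 : Oct (O.image (γ ^ j)) := himage j O hO
    have hyT' : (γ ^ j) y ∉ T := fun h => hyT (hnotT y j h)
    have heq : O = O.image (γ ^ j) :=
      huniq _ hyT' O _ hO hO2 hc (Finset.mem_image.mpr ⟨y, hyO, rfl⟩)
    have hstep : ∀ z ∈ O, (γ ^ j) z ∈ O := by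
      intro z hz
      rw [heq]
      exact Finset.mem_image.mpr ⟨z, hz, rfl⟩
    have horbO : ∀ i : ℕ, (γ ^ (j * i)) y ∈ O := by
      intro i
      induction i with
      | zero => simpa using hyO
      | succ n ih =>
        have e : (γ ^ (j * (n + 1))) y = (γ ^ j) ((γ ^ (j * n)) y) := by
          rw [Nat.mul_succ, Nat.add_comm, pow_add, Equiv.Perm.mul_apply]
        rw [e]
        exact hstep _ ih
    set F : Finset Ω := (Finset.range 5).image (fun i => (γ ^ (j * i)) y) with hF
    have hFinj : ∀ a ∈ Finset.range 5, ∀ b ∈ Finset.range 5,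
        (γ ^ (j * a)) y = (γ ^ (j * b)) y → a = b := by
      intro a ha b hb hab
      simp only [Finset.mem_range] at ha hb
      by_contra hne
      rcases Nat.lt_or_ge a b with h | h
      · have hd : j * b = j * a + j * (b - a) := by
          rw [← Nat.mul_add]
          congr 1
          omega
        rw [hd] at hab
        exact hinj y hyT (j * a) (j * (b - a)) (hnd5 j (b - a) hj (by omega) (by omega)) hab
      · have hlt : b < a := by omega
        have hd : j * a = j * b + j * (a - b) := by
          rw [← Nat.mul_add]
          congr 1
          omega
        rw [hd] at hab
        exact hinj y hyT (j * b) (j * (a - b)) (hnd5 j (a - b) hj (by omega) (by omega)) hab.symm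
    have hFcard : F.card = 5 := by
      rw [hF, Finset.card_image_of_injOn, Finset.card_range]
      intro a ha b hb hab
      exact hFinj a ha b hb hab
    have hFsub : F ⊆ O := by
      intro w hw
      rw [hF] at hw
      obtain ⟨i, _, rfl⟩ := Finset.mem_image.mp hw
      exact horbO i
    have hFT : Disjoint F T := by
      rw [Finset.disjoint_left]
      intro w hw hwT
      rw [hF] at hw
      obtain ⟨i, _, rfl⟩ := Finset.mem_image.mp hw
      exact hyT (hnotT y (j * i) hwT)
    have hle : (F ∪ T).card ≤ O.card :=
      Finset.card_le_card (Finset.union_subset hFsub hO.2.2)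
    rw [Finset.card_union_of_disjoint hFT, hFcard, hT, hO.2.1] at hle
    omega
  -- the orbit of a point
  set orb : Ω → Finset Ω := fun x => Finset.univ.filter (fun y => ∃ k : ℕ, (γ ^ k) x = y)
    with horbdef
  have horbmem : ∀ x y : Ω, y ∈ orb x ↔ ∃ k : ℕ, (γ ^ k) x = y := by
    intro x y
    simp [horbdef]
  have horbself : ∀ x : Ω, x ∈ orb x := by
    intro x
    exact (horbmem x x).mpr ⟨0, by simp⟩
  have horbsymm : ∀ x y : Ω, y ∈ orb x → x ∈ orb y := by
    intro x y hy
    obtain ⟨k, rfl⟩ := (horbmem x y).mp hy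
    refine (horbmem _ x).mpr ⟨4 * k, ?_⟩
    rw [← Equiv.Perm.mul_apply, ← pow_add]
    have : 4 * k + k = 5 * k := by ring
    rw [this, hpow5 (5 * k) ⟨k, rfl⟩]
    simp
  have horbtrans : ∀ x y z : Ω, y ∈ orb x → z ∈ orb y → z ∈ orb x := by
    intro x y z hy hz
    obtain ⟨k, rfl⟩ := (horbmem x y).mp hy
    obtain ⟨m, rfl⟩ := (horbmem _ _).mp hz
    exact (horbmem _ _).mpr ⟨m + k, by rw [pow_add, Equiv.Perm.mul_apply]⟩
  have horbnotT : ∀ x : Ω, x ∉ T → ∀ y ∈ orb x, y ∉ T := by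
    intro x hx y hy hyT
    obtain ⟨k, rfl⟩ := (horbmem x y).mp hy
    exact hx (hnotT x k hyT)
  have horbcard : ∀ x : Ω, x ∉ T → (orb x).card = 5 := by
    intro x hx
    have he : orb x = (Finset.range 5).image (fun i => (γ ^ i) x) := by
      ext y
      rw [horbmem, Finset.mem_image]
      constructor
      · rintro ⟨k, rfl⟩
        exact ⟨k % 5, Finset.mem_range.mpr (Nat.mod_lt k (by norm_num)), by rw [← hred]⟩
      · rintro ⟨i, _, rfl⟩
        exact ⟨i, rfl⟩
    rw [he, Finset.card_image_of_injOn, Finset.card_range]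
    intro a ha b hb hab
    have ha' : a < 5 := by simpa using ha
    have hb' : b < 5 := by simpa using hb
    by_contra hne
    rcases Nat.lt_or_ge a b with h | h
    · have hd : b = a + (b - a) := by omega
      rw [hd] at hab
      exact hinj x hx a (b - a) (by omega) hab
    · have hd : a = b + (a - b) := by omega
      rw [hd] at hab
      exact hinj x hx b (a - b) (by omega) hab.symm
  -- orbits of points in an octad ⊇ T: at most one point per orbit; plus counting
  have hmeet : ∀ O : Finset Ω, Oct O → ∀ x : Ω, x ∉ T → ∃ y ∈ O, y ∈ orb x := by
    intro O hO x hx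
    by_contra hno
    push_neg at hno
    have hxO : x ∉ O := fun h => hno x h (horbself x)
    set F : Finset Ω := insert x (O \ T) with hF
    have hOT : (O \ T).card = 4 := by
      rw [Finset.card_sdiff_of_subset hO.2.2, hO.2.1, hT]
    have hxF : x ∉ O \ T := fun h => hxO (Finset.mem_sdiff.mp h).1
    have hFcard : F.card = 5 := by
      rw [hF, Finset.card_insert_of_notMem hxF, hOT]
    have hFnotT : ∀ z ∈ F, z ∉ T := by
      intro z hz
      rcases Finset.mem_insert.mp hz with rfl | hz'
      · exact hx
      · exact (Finset.mem_sdiff.mp hz').2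
    -- orbits of distinct elements of F are disjoint
    have hdisj : ∀ z ∈ F, ∀ z' ∈ F, z ≠ z' → Disjoint (orb z) (orb z') := by
      intro z hz z' hz' hne
      rw [Finset.disjoint_left]
      intro w hw hw'
      have hz'z : z' ∈ orb z := horbtrans z w z' hw (horbsymm z' w hw')
      rcases Finset.mem_insert.mp hz with rfl | hzO
      · rcases Finset.mem_insert.mp hz' with rfl | hz'O
        · exact hne rfl
        · exact hno z' (Finset.mem_sdiff.mp hz'O).1 hz'z
      · rcases Finset.mem_insert.mp hz' with rfl | hz'O
        · exact hno z (Finset.mem_sdiff.mp hzO).1 (horbsymm z z' hz'z)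
        · obtain ⟨k, hk⟩ := (horbmem z z').mp hz'z
          by_cases h5 : 5 ∣ k
          · rw [hpow5 k h5] at hk
            exact hne (by simpa using hk)
          · exact hkey O hO z (Finset.mem_sdiff.mp hzO).1 (Finset.mem_sdiff.mp hzO).2 k h5
              (hk ▸ (Finset.mem_sdiff.mp hz'O).1)
    have hbU : (F.biUnion orb).card = 25 := by
      rw [Finset.card_biUnion hdisj]
      have : ∀ z ∈ F, (orb z).card = 5 := fun z hz => horbcard z (hFnotT z hz)
      rw [Finset.sum_congr rfl this, Finset.sum_const, hFcard]
      norm_num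
    have hsub : F.biUnion orb ⊆ Finset.univ \ T := by
      intro w hw
      obtain ⟨z, hz, hwz⟩ := Finset.mem_biUnion.mp hw
      exact Finset.mem_sdiff.mpr ⟨Finset.mem_univ w, horbnotT z (hFnotT z hz) w hwz⟩
    have hc20 : (Finset.univ \ T).card = 20 := by
      rw [Finset.card_sdiff_of_subset (Finset.subset_univ T), Finset.card_univ, G.card_omega, hT]
    have := Finset.card_le_card hsub
    rw [hbU, hc20] at this
    omega
  -- Part 2 statement, in terms of orb
  have part2 : ∀ O : Finset Ω, Oct O → ∀ x : Ω, x ∉ T → (O ∩ orb x).card = 1 := by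
    intro O hO x hx
    obtain ⟨y, hyO, hyorb⟩ := hmeet O hO x hx
    rw [Finset.card_eq_one]
    refine ⟨y, ?_⟩
    ext w
    simp only [Finset.mem_inter, Finset.mem_singleton]
    constructor
    · rintro ⟨hwO, hworb⟩
      -- y and w both in orbit of x and in O; show equal
      obtain ⟨k, rfl⟩ := (horbmem x y).mp hyorb
      obtain ⟨m, rfl⟩ := (horbmem x w).mp hworb
      by_contra hne
      have hyT : (γ ^ k) x ∉ T := horbnotT x hx _ hyorb
      rcases Nat.lt_or_ge k m with h | h
      · obtain ⟨d, rfl⟩ : ∃ d, m = k + d := ⟨m - k, by omega⟩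
        have h5 : ¬ (5 ∣ d) := by
          intro h5
          apply hne
          rw [pow_add, Equiv.Perm.mul_apply, hpow5 _ h5]
          simp
        have he : (γ ^ (k + d)) x = (γ ^ d) ((γ ^ k) x) := by
          rw [Nat.add_comm, pow_add, Equiv.Perm.mul_apply]
        rw [he] at hwO
        exact hkey O hO _ hyO hyT d h5 hwO
      · obtain ⟨d, rfl⟩ : ∃ d, k = m + d := ⟨k - m, by omega⟩
        by_cases h5 : 5 ∣ d
        · apply hne
          rw [pow_add, Equiv.Perm.mul_apply, hpow5 _ h5]
          simp
        · have hwT : (γ ^ m) x ∉ T := horbnotT x hx _ hworb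
          have he : (γ ^ (m + d)) x = (γ ^ d) ((γ ^ m) x) := by
            rw [Nat.add_comm, pow_add, Equiv.Perm.mul_apply]
          rw [he] at hyO
          exact hkey O hO _ hwO hwT d h5 hyO
    · rintro rfl
      exact ⟨hyO, hyorb⟩
  constructor
  · -- transitivity
    intro O hOc O' hOc' h8 h8' hTO hTO'
    have hO : Oct O := ⟨hOc, h8, hTO⟩
    have hO' : Oct O' := ⟨hOc', h8', hTO'⟩
    have hne : (O' \ T).Nonempty := by
      rw [← Finset.card_pos, Finset.card_sdiff_of_subset hTO', h8', hT]
      norm_num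
    obtain ⟨x', hx'⟩ := hne
    obtain ⟨hx'O', hx'T⟩ := Finset.mem_sdiff.mp hx'
    obtain ⟨y, hyO, hyorb⟩ := hmeet O hO x' hx'T
    obtain ⟨k, rfl⟩ := (horbmem x' y).mp hyorb
    have hO'' : Oct (O'.image (γ ^ k)) := himage k O' hO'
    have hyT : (γ ^ k) x' ∉ T := fun h => hx'T (hnotT x' k h)
    have heq : O = O'.image (γ ^ k) :=
      huniq _ hyT O _ hO hO'' hyO (Finset.mem_image.mpr ⟨x', hx'O', rfl⟩)
    refine ⟨4 * k, ?_⟩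
    rw [heq, Finset.image_image]
    have hcomp : (⇑(γ ^ (4 * k)) ∘ ⇑(γ ^ k)) = ⇑(γ ^ (4 * k) * γ ^ k) := rfl
    rw [hcomp, ← pow_add]
    have h5k : 4 * k + k = 5 * k := by ring
    rw [h5k, hpow5 (5 * k) ⟨k, rfl⟩]
    simp
  · -- one point per orbit
    intro O hOc h8 hTO x hx
    exact part2 O ⟨hOc, h8, hTO⟩ x hx
end

section
/- Let D be a dodecad of the extended binary Golay code and O an octad. Then |D ∩ O| ∈ {2, 4, 6}. In particular, the unique octad containing any given 5-element subset of D meets D in a special hexad, so any 5-element subset of D is contained in a unique special hexad included in D; hence D contains exactly 132 special hexads and exactly 792 umbral hexads. -/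
open scoped symmDiff Classical

lemma card_symmDiff' {α : Type*} [DecidableEq α] (s t : Finset α) :
    (s ∆ t).card + (s ∩ t).card + (s ∩ t).card = s.card + t.card := by
  rw [symmDiff_def]
  show ((s \ t) ∪ (t \ s)).card + _ + _ = _
  rw [Finset.card_union_of_disjoint (disjoint_sdiff_sdiff)]
  have h1 := Finset.card_sdiff_add_card_inter s t
  have h2 := Finset.card_sdiff_add_card_inter t s
  rw [Finset.inter_comm t s] at h2
  omega

/-- Let `D` be a dodecad of the extended binary Golay code.  Then for any
octad `O` one has `|D ∩ O| ∈ {2, 4, 6}`; any 5-element subset of `D` is contained in a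
unique special hexad included in `D`; and `D` contains exactly 132 special hexads and
exactly 792 umbral hexads. -/
theorem statement6 {Ω : Type*} [Fintype Ω] [DecidableEq Ω] (G : GolayCode Ω)
    (D : Finset Ω) (hD : D ∈ G.carrier) (hD12 : D.card = 12) :
    -- a dodecad meets any octad in 2, 4 or 6 points
    (∀ O ∈ G.carrier, O.card = 8 → (D ∩ O).card ∈ ({2, 4, 6} : Set ℕ)) ∧
    -- any 5-element subset of `D` lies in a unique special hexad contained in `D`
    (∀ S : Finset Ω, S ⊆ D → S.card = 5 →
      ∃! H : Finset Ω, H.card = 6 ∧ (∃ O ∈ G.carrier, O.card = 8 ∧ H ⊆ O) ∧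
        H ⊆ D ∧ S ⊆ H) ∧
    -- `D` contains exactly 132 special hexads
    ((D.powersetCard 6).filter
        (fun H => ∃ O ∈ G.carrier, O.card = 8 ∧ H ⊆ O)).card = 132 ∧
    -- `D` contains exactly 792 umbral hexads
    ((D.powersetCard 6).filter
        (fun H => ¬ ∃ O ∈ G.carrier, O.card = 8 ∧ H ⊆ O)).card = 792 := by
  have part1 : ∀ O ∈ G.carrier, O.card = 8 → (D ∩ O).card ∈ ({2, 4, 6} : Set ℕ) := by
    intro O hO hO8
    have hmem := G.symmDiff_mem D hD O hO
    have hw := G.weight_mem _ hmem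
    have hcard := card_symmDiff' D O
    rw [hD12, hO8] at hcard
    have hle : (D ∩ O).card ≤ 8 := by
      calc (D ∩ O).card ≤ O.card := Finset.card_le_card Finset.inter_subset_right
        _ = 8 := hO8
    simp only [Set.mem_insert_iff, Set.mem_singleton_iff] at hw ⊢
    omega
  have part2 : ∀ S : Finset Ω, S ⊆ D → S.card = 5 →
      ∃! H : Finset Ω, H.card = 6 ∧ (∃ O ∈ G.carrier, O.card = 8 ∧ H ⊆ O) ∧
        H ⊆ D ∧ S ⊆ H := by
    intro S hSD hS5
    obtain ⟨O, ⟨hO, hO8, hSO⟩, huniq⟩ := G.steiner S hS5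
    have hk := part1 O hO hO8
    have hSsub : S ⊆ D ∩ O := Finset.subset_inter hSD hSO
    have h5le : 5 ≤ (D ∩ O).card := hS5 ▸ Finset.card_le_card hSsub
    have h6 : (D ∩ O).card = 6 := by
      simp only [Set.mem_insert_iff, Set.mem_singleton_iff] at hk; omega
    refine ⟨D ∩ O, ⟨h6, ⟨O, hO, hO8, Finset.inter_subset_right⟩,
      Finset.inter_subset_left, hSsub⟩, ?_⟩
    rintro H ⟨hH6, ⟨O', hO', hO'8, hHO'⟩, hHD, hSH⟩
    have hOO : O' = O := huniq O' ⟨hO', hO'8, hSH.trans hHO'⟩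
    subst hOO
    exact Finset.eq_of_subset_of_card_le (Finset.subset_inter hHD hHO') (by omega)
  refine ⟨part1, part2, ?_⟩
  set A := (D.powersetCard 6).filter (fun H => ∃ O ∈ G.carrier, O.card = 8 ∧ H ⊆ O)
    with hA
  have hunion : D.powersetCard 5 = A.biUnion (fun H => H.powersetCard 5) := by
    ext S
    simp only [Finset.mem_biUnion, Finset.mem_powersetCard, hA, Finset.mem_filter]
    constructor
    · rintro ⟨hSD, hS5⟩
      obtain ⟨H, ⟨hH6, hspec, hHD, hSH⟩, -⟩ := part2 S hSD hS5
      exact ⟨H, ⟨⟨hHD, hH6⟩, hspec⟩, hSH, hS5⟩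
    · rintro ⟨H, ⟨⟨hHD, _⟩, _⟩, hSH, hS5⟩
      exact ⟨hSH.trans hHD, hS5⟩
  have hcardA : A.card = 132 := by
    have hdisj : ∀ H1 ∈ A, ∀ H2 ∈ A, H1 ≠ H2 →
        Disjoint (H1.powersetCard 5) (H2.powersetCard 5) := by
      intro H1 h1 H2 h2 hne
      simp only [hA, Finset.mem_filter, Finset.mem_powersetCard] at h1 h2
      refine Finset.disjoint_left.mpr fun S hS1 hS2 => ?_
      simp only [Finset.mem_powersetCard] at hS1 hS2
      obtain ⟨H0, -, hu⟩ := part2 S (hS1.1.trans h1.1.1) hS1.2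
      exact hne ((hu H1 ⟨h1.1.2, h1.2, h1.1.1, hS1.1⟩).trans
        (hu H2 ⟨h2.1.2, h2.2, h2.1.1, hS2.1⟩).symm)
    have h6 : ∀ H ∈ A, (H.powersetCard 5).card = 6 := by
      intro H hH
      simp only [hA, Finset.mem_filter, Finset.mem_powersetCard] at hH
      rw [Finset.card_powersetCard, hH.1.2]
      decide
    have hcount : (D.powersetCard 5).card = A.card * 6 := by
      rw [hunion, Finset.card_biUnion hdisj, Finset.sum_congr rfl h6,
        Finset.sum_const, smul_eq_mul]
    rw [Finset.card_powersetCard, hD12] at hcount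
    have : Nat.choose 12 5 = 792 := by decide
    omega
  refine ⟨hcardA, ?_⟩
  have htot := Finset.card_filter_add_card_filter_not
    (s := D.powersetCard 6) (p := fun H => ∃ O ∈ G.carrier, O.card = 8 ∧ H ⊆ O)
  rw [Finset.card_powersetCard, hD12] at htot
  have : Nat.choose 12 6 = 924 := by decide
  rw [← hA] at htot
  omega
end

section
/- Let γ ∈ M₂₄ be an element of order 3 with exactly 6 fixed points on Ω. Then the fixed-point set U of γ is an umbral hexad, and every dodecad containing U intersects each 3-cycle orbit of γ in exactly one point. -/
open scoped symmDiff Classical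

section Aux

variable {Ω : Type*} [Fintype Ω] [DecidableEq Ω]

lemma aux_card_symmDiff (C D : Finset Ω) :
    (C ∆ D).card + 2 * (C ∩ D).card = C.card + D.card := by
  have h1 := Finset.card_inter_add_card_sdiff C D
  have h2 := Finset.card_inter_add_card_sdiff D C
  have h3 : (C ∆ D).card = (C \ D).card + (D \ C).card := by
    rw [symmDiff_def]
    exact Finset.card_union_of_disjoint disjoint_sdiff_sdiff
  rw [Finset.inter_comm D C] at h2
  omega

/-- A γ-invariant finset avoiding the fixed set has cardinality divisible by 3. -/
lemma aux_dvd_card (γ : Equiv.Perm Ω) (U : Finset Ω)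
    (hUfix : ∀ x : Ω, γ x = x ↔ x ∈ U)
    (h3 : ∀ x : Ω, γ (γ (γ x)) = x) :
    ∀ n (V : Finset Ω), V.card = n → V.image γ = V → (∀ x ∈ V, x ∉ U) → 3 ∣ V.card := by
  intro n
  induction n using Nat.strong_induction_on with
  | _ n ih =>
    intro V hVn hVinv hVU
    rcases V.eq_empty_or_nonempty with h | ⟨x, hx⟩
    · simp [h]
    · have hxU : x ∉ U := hVU x hx
      have hst : ∀ y ∈ V, γ y ∈ V := by
        intro y hy
        rw [← hVinv]; exact Finset.mem_image_of_mem γ hy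
      have hgx : γ x ∈ V := hst x hx
      have hggx : γ (γ x) ∈ V := hst _ hgx
      have hgxU : γ x ∉ U := hVU _ hgx
      have hggxU : γ (γ x) ∉ U := hVU _ hggx
      have ne1 : γ x ≠ x := fun h => hxU ((hUfix x).mp h)
      have ne2 : γ (γ x) ≠ γ x := fun h => hgxU ((hUfix (γ x)).mp h)
      have ne3 : γ (γ x) ≠ x := by
        intro h
        have h2 := congrArg γ h
        rw [h3 x] at h2
        exact ne1 h2.symm
      set T : Finset Ω := {x, γ x, γ (γ x)} with hT
      have hTV : T ⊆ V := by
        intro a ha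
        simp only [hT, Finset.mem_insert, Finset.mem_singleton] at ha
        rcases ha with rfl | rfl | rfl <;> assumption
      have hTcard : T.card = 3 := by
        rw [hT, Finset.card_insert_of_notMem (by
            simp only [Finset.mem_insert, Finset.mem_singleton]
            push_neg
            exact ⟨fun h => ne1 h.symm, fun h => ne3 h.symm⟩),
          Finset.card_insert_of_notMem (by
            simp only [Finset.mem_singleton]
            exact fun h => ne2 h.symm),
          Finset.card_singleton]
      have hTinv : T.image γ = T := by
        ext a
        simp only [hT, Finset.mem_image, Finset.mem_insert, Finset.mem_singleton]
        constructor
        · rintro ⟨b, hb, rfl⟩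
          rcases hb with rfl | rfl | rfl
          · tauto
          · tauto
          · exact Or.inl (h3 x)
        · intro h
          rcases h with h | h | h
          · exact ⟨γ (γ x), Or.inr (Or.inr rfl), by rw [h3]; exact h.symm⟩
          · exact ⟨x, Or.inl rfl, h.symm⟩
          · exact ⟨γ x, Or.inr (Or.inl rfl), h.symm⟩
      have hV'inv : (V \ T).image γ = V \ T := by
        rw [Finset.image_sdiff _ _ γ.injective, hVinv, hTinv]
      have hV'card : (V \ T).card = V.card - 3 := by
        rw [Finset.card_sdiff_of_subset hTV, hTcard]
      have h3le : 3 ≤ V.card := hTcard ▸ Finset.card_le_card hTV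
      have := ih (V.card - 3) (by omega) (V \ T) hV'card hV'inv
        (fun y hy => hVU y (Finset.mem_sdiff.mp hy).1)
      rw [hV'card] at this
      omega

lemma aux_rot (a b c : Ω) : ({a, b, c} : Finset Ω) = {c, a, b} := by
  ext z
  simp only [Finset.mem_insert, Finset.mem_singleton]
  tauto

lemma aux_symmDiff_rot (A B C : Finset Ω) : B ∆ C ∆ A = A ∆ B ∆ C := by
  ext z
  simp only [Finset.mem_symmDiff]
  tauto

lemma aux_inter_rot (A B C : Finset Ω) : B ∩ C ∩ A = A ∩ B ∩ C := by
  ext z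
  simp only [Finset.mem_inter]
  tauto

end Aux

set_option maxHeartbeats 1000000 in
/-- Let `γ ∈ M₂₄` have order 3 with exactly 6 fixed points on `Ω`.  Then
the fixed-point set `U` of `γ` is an umbral hexad (contained in no octad), and every
dodecad containing `U` meets each 3-cycle orbit of `γ` in exactly one point. -/
theorem statement7 {Ω : Type*} [Fintype Ω] [DecidableEq Ω] (G : GolayCode Ω)
    (γ : Equiv.Perm Ω) (hγ : G.IsM24 γ) (hord : orderOf γ = 3)
    (U : Finset Ω) (hUfix : ∀ x : Ω, γ x = x ↔ x ∈ U) (hU : U.card = 6) :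
    -- `U` is an umbral hexad
    (¬ ∃ O ∈ G.carrier, O.card = 8 ∧ U ⊆ O) ∧
    -- every dodecad containing `U` meets each orbit of `γ` outside `U` in one point
    (∀ D ∈ G.carrier, D.card = 12 → U ⊆ D → ∀ x : Ω, x ∉ U →
      (D ∩ Finset.univ.filter (fun y => ∃ k : ℕ, (γ ^ k) x = y)).card = 1) := by
  have hinj := γ.injective
  have hpow3 : γ ^ 3 = 1 := by rw [← hord]; exact pow_orderOf_eq_one γ
  have h3 : ∀ x : Ω, γ (γ (γ x)) = x := by
    intro x
    have : (γ ^ 3) x = x := by rw [hpow3]; rfl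
    simpa [pow_succ, Equiv.Perm.mul_apply] using this
  -- basic code facts
  have hmem : ∀ C ∈ G.carrier, C.image γ ∈ G.carrier := fun C h => (hγ C).mp h
  have hcard_img : ∀ C : Finset Ω, (C.image γ).card = C.card :=
    fun C => Finset.card_image_of_injective C hinj
  have himgU : U.image γ = U := by
    ext a
    simp only [Finset.mem_image]
    constructor
    · rintro ⟨b, hb, rfl⟩
      rwa [(hUfix b).mpr hb]
    · intro ha
      exact ⟨a, ha, (hUfix a).mpr ha⟩
  have htriple : ∀ C : Finset Ω, ((C.image γ).image γ).image γ = C := by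
    intro C
    rw [Finset.image_image, Finset.image_image]
    have h : ((⇑γ ∘ ⇑γ) ∘ ⇑γ : Ω → Ω) = id := funext fun x => h3 x
    rw [h, Finset.image_id]
  have hdvd := aux_dvd_card γ U hUfix h3
  have hinv_empty : ∀ V : Finset Ω, V.image γ = V → (∀ x ∈ V, x ∉ U) →
      V.card ≤ 2 → V = ∅ := by
    intro V hVinv hVU hle
    have := hdvd V.card V rfl hVinv hVU
    have : V.card = 0 := by omega
    exact Finset.card_eq_zero.mp this
  -- weight of a codeword
  have hweight : ∀ C ∈ G.carrier, C.card = 0 ∨ C.card = 8 ∨ C.card = 12 ∨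
      C.card = 16 ∨ C.card = 24 := by
    intro C hC
    have := G.weight_mem C hC
    simpa [Set.mem_insert_iff] using this
  -- Part 1: U is umbral
  obtain ⟨S, hSU, hS5⟩ := Finset.exists_subset_card_eq (s := U) (n := 5) (by omega)
  have himgS : S.image γ = S := by
    ext a
    simp only [Finset.mem_image]
    constructor
    · rintro ⟨b, hb, rfl⟩
      rwa [(hUfix b).mpr (hSU hb)]
    · intro ha
      exact ⟨a, ha, (hUfix a).mpr (hSU ha)⟩
  obtain ⟨O₀, hO₀, hO₀uniq⟩ := G.steiner S hS5
  have part1 : ¬ ∃ O ∈ G.carrier, O.card = 8 ∧ U ⊆ O := by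
    rintro ⟨O, hOc, hO8, hUO⟩
    have hO : O = O₀ := hO₀uniq O ⟨hOc, hO8, hSU.trans hUO⟩
    have hgO : O.image γ = O := by
      have h1 : O.image γ = O₀ := by
        refine hO₀uniq _ ⟨hmem O hOc, by rw [hcard_img, hO8], ?_⟩
        rw [← himgS]
        exact Finset.image_subset_image (hSU.trans hUO)
      rw [h1, ← hO]
    have hVinv : (O \ U).image γ = O \ U := by
      rw [Finset.image_sdiff _ _ hinj, hgO, himgU]
    have hVU : ∀ x ∈ O \ U, x ∉ U := fun x hx => (Finset.mem_sdiff.mp hx).2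
    have hVcard : (O \ U).card = 2 := by
      rw [Finset.card_sdiff_of_subset hUO, hO8, hU]
    have := hinv_empty (O \ U) hVinv hVU (by omega)
    rw [this] at hVcard
    simp at hVcard
  refine ⟨part1, ?_⟩
  -- Key lemma: no γ-invariant dodecad contains U
  have lemB : ∀ E ∈ G.carrier, E.card = 12 → U ⊆ E → E.image γ = E → False := by
    intro E hEc hE12 hUE hgE
    have hgO : O₀.image γ = O₀ := by
      refine hO₀uniq _ ⟨hmem O₀ hO₀.1, by rw [hcard_img, hO₀.2.1], ?_⟩
      rw [← himgS]
      exact Finset.image_subset_image hO₀.2.2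
    have hSOE : S ⊆ O₀ ∩ E := Finset.subset_inter hO₀.2.2 (hSU.trans hUE)
    have hi5 : 5 ≤ (O₀ ∩ E).card := hS5 ▸ Finset.card_le_card hSOE
    have hi8 : (O₀ ∩ E).card ≤ 8 := hO₀.2.1 ▸ Finset.card_le_card Finset.inter_subset_left
    have hwsd := hweight (O₀ ∆ E) (G.symmDiff_mem _ hO₀.1 _ hEc)
    have hcsd := aux_card_symmDiff O₀ E
    rw [hO₀.2.1, hE12] at hcsd
    have hi6 : (O₀ ∩ E).card = 6 := by omega
    -- the invariant set (O₀ ∩ E) \ U is small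
    have hVinv : ((O₀ ∩ E) \ U).image γ = (O₀ ∩ E) \ U := by
      rw [Finset.image_sdiff _ _ hinj, Finset.image_inter _ _ hinj, hgO, hgE, himgU]
    have hSsub : S ⊆ (O₀ ∩ E) ∩ U := Finset.subset_inter hSOE hSU
    have h5le : 5 ≤ ((O₀ ∩ E) ∩ U).card := hS5 ▸ Finset.card_le_card hSsub
    have hVsmall : ((O₀ ∩ E) \ U).card ≤ 1 := by
      have := Finset.card_inter_add_card_sdiff (O₀ ∩ E) U
      omega
    have hVempty := hinv_empty _ hVinv (fun x hx => (Finset.mem_sdiff.mp hx).2)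
      (by omega)
    have hsub : O₀ ∩ E ⊆ U := by
      intro a ha
      by_contra haU
      have : a ∈ (O₀ ∩ E) \ U := Finset.mem_sdiff.mpr ⟨ha, haU⟩
      rw [hVempty] at this
      simp at this
    have : O₀ ∩ E = U := Finset.eq_of_subset_of_card_le hsub (by omega)
    exact part1 ⟨O₀, hO₀.1, hO₀.2.1, this ▸ Finset.inter_subset_left⟩
  -- Part 2
  intro D hDc hD12 hUD x hxU
  set D1 := D.image γ with hD1
  set D2 := D1.image γ with hD2
  have hD1c : D1 ∈ G.carrier := hmem D hDc
  have hD2c : D2 ∈ G.carrier := hmem D1 hD1c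
  have hD1card : D1.card = 12 := by rw [hD1, hcard_img, hD12]
  have hD2card : D2.card = 12 := by rw [hD2, hcard_img, hD1card]
  have hUD1 : U ⊆ D1 := by
    intro u hu
    have : γ u = u := (hUfix u).mpr hu
    exact this ▸ Finset.mem_image_of_mem γ (hUD hu)
  have hUD2 : U ⊆ D2 := by
    intro u hu
    have : γ u = u := (hUfix u).mpr hu
    exact this ▸ Finset.mem_image_of_mem γ (hUD1 hu)
  have hD2img : D2.image γ = D := htriple D
  -- cardinality of D ∩ D1
  have hw01 := hweight (D ∆ D1) (G.symmDiff_mem _ hDc _ hD1c)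
  have hc01 := aux_card_symmDiff D D1
  rw [hD12, hD1card] at hc01
  have hU01 : U ⊆ D ∩ D1 := Finset.subset_inter hUD hUD1
  have h6le01 : 6 ≤ (D ∩ D1).card := hU ▸ Finset.card_le_card hU01
  have hle01 : (D ∩ D1).card ≤ 12 := hD12 ▸ Finset.card_le_card Finset.inter_subset_left
  -- |D ∆ D2| = |D ∆ D1|
  have hsd02 : (D ∆ D2).card = (D ∆ D1).card := by
    have h1 : (D ∆ D2).image γ = D1 ∆ D := by
      rw [Finset.image_symmDiff _ _ hinj, ← hD1, hD2img]
    have := hcard_img (D ∆ D2)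
    rw [h1] at this
    rw [← this, symmDiff_comm]
  have hc02 := aux_card_symmDiff D D2
  rw [hD12, hD2card] at hc02
  have ht : (D ∩ D1).card = 6 ∨ (D ∩ D1).card = 8 ∨ (D ∩ D1).card = 12 := by omega
  -- rule out t = 12
  have hne12 : (D ∩ D1).card ≠ 12 := by
    intro h12
    have hsub : D ⊆ D1 := by
      have : D ∩ D1 = D :=
        Finset.eq_of_subset_of_card_le Finset.inter_subset_left (by omega)
      intro a ha
      exact (Finset.mem_inter.mp (this ▸ ha)).2
    have : D = D1 := Finset.eq_of_subset_of_card_le hsub (by omega)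
    exact lemB D hDc hD12 hUD (by rw [← hD1, ← this])
  -- rule out t = 8
  have hne8 : (D ∩ D1).card ≠ 8 := by
    intro h8
    have h02 : (D ∩ D2).card = 8 := by omega
    have h12' : (D1 ∩ D2).card = 8 := by
      have : (D ∩ D1).image γ = D1 ∩ D2 := by
        rw [Finset.image_inter _ _ hinj, ← hD1, ← hD2]
      rw [← this, hcard_img, h8]
    -- triple intersection is U
    set A := D ∩ D1 ∩ D2 with hA
    have hUA : U ⊆ A := Finset.subset_inter hU01 hUD2
    have hAinv : A.image γ = A := by
      rw [hA, Finset.image_inter _ _ hinj, Finset.image_inter _ _ hinj,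
        ← hD1, ← hD2, hD2img]
      exact aux_inter_rot D D1 D2
    have hAle : A.card ≤ 8 := h8 ▸ Finset.card_le_card Finset.inter_subset_left
    have h6A : 6 ≤ A.card := hU ▸ Finset.card_le_card hUA
    have hAVinv : (A \ U).image γ = A \ U := by
      rw [Finset.image_sdiff _ _ hinj, hAinv, himgU]
    have hAVcard : (A \ U).card ≤ 2 := by
      have := Finset.card_sdiff_of_subset hUA
      omega
    have hAVempty := hinv_empty _ hAVinv (fun y hy => (Finset.mem_sdiff.mp hy).2) hAVcard
    have hAsubU : A ⊆ U := by
      intro a ha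
      by_contra haU
      have h := Finset.mem_sdiff.mpr ⟨ha, haU⟩
      rw [hAVempty] at h
      simp at h
    have hAU : A = U := (Finset.eq_of_subset_of_card_le hUA
      (Finset.card_le_card hAsubU)).symm
    have hA6 : A.card = 6 := by rw [hAU, hU]
    -- but also A \ U = ∅ forces A ⊆ U; we already have A = U
    -- E := D ∆ D1 ∆ D2 is a γ-invariant dodecad containing U
    set E := D ∆ D1 ∆ D2 with hE
    have hEc : E ∈ G.carrier := G.symmDiff_mem _ (G.symmDiff_mem _ hDc _ hD1c) _ hD2c
    have hUE : U ⊆ E := by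
      intro u hu
      have h1 : u ∈ D := hUD hu
      have h2 : u ∈ D1 := hUD1 hu
      have h3' : u ∈ D2 := hUD2 hu
      simp only [hE, Finset.mem_symmDiff, h1, h2, h3', not_true, and_true, true_and,
        and_false, false_and, or_false, false_or, not_false_iff]
    have hgE : E.image γ = E := by
      have h1 : E.image γ = D1 ∆ D2 ∆ D := by
        rw [hE, Finset.image_symmDiff _ _ hinj, Finset.image_symmDiff _ _ hinj,
          ← hD1, ← hD2, hD2img]
      rw [h1, hE]
      exact aux_symmDiff_rot D D1 D2
    -- γ-invariance of E \ U gives 3 ∣ |E| - 6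
    have hEU3 : 3 ∣ (E \ U).card := by
      refine hdvd _ _ rfl ?_ (fun y hy => (Finset.mem_sdiff.mp hy).2)
      rw [Finset.image_sdiff _ _ hinj, hgE, himgU]
    have hEUcard : (E \ U).card = E.card - 6 := by
      rw [Finset.card_sdiff_of_subset hUE, hU]
    have h6E : 6 ≤ E.card := hU ▸ Finset.card_le_card hUE
    have hwE := hweight E hEc
    -- E ≠ univ : find a point of (D ∩ D1) \ A
    have hnotsub : ¬ (D ∩ D1 ⊆ A) := by
      intro hsub
      have := Finset.card_le_card hsub
      omega
    obtain ⟨y, hy, hyA⟩ := Finset.not_subset.mp hnotsub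
    have hyD : y ∈ D := (Finset.mem_inter.mp hy).1
    have hyD1 : y ∈ D1 := (Finset.mem_inter.mp hy).2
    have hyD2 : y ∉ D2 := fun h => hyA (Finset.mem_inter.mpr ⟨hy, h⟩)
    have hyE : y ∉ E := by
      simp [hE, Finset.mem_symmDiff, hyD, hyD1, hyD2]
    have hEne24 : E.card ≠ 24 := by
      intro h24
      have : E = Finset.univ := by
        rw [← Finset.card_eq_iff_eq_univ, G.card_omega, h24]
      exact hyE (this ▸ Finset.mem_univ y)
    have hE12' : E.card = 12 := by omega
    exact lemB E hEc hE12' hUE hgE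
  -- hence t = 6 and the three pairwise intersections are all U
  have ht6 : (D ∩ D1).card = 6 := by omega
  have hDD1 : D ∩ D1 = U := (Finset.eq_of_subset_of_card_le hU01 (by omega)).symm
  have hDD2 : D ∩ D2 = U := by
    have h6 : (D ∩ D2).card = 6 := by omega
    exact (Finset.eq_of_subset_of_card_le (Finset.subset_inter hUD hUD2) (by omega)).symm
  have hD1D2 : D1 ∩ D2 = U := by
    have : (D ∩ D1).image γ = D1 ∩ D2 := by
      rw [Finset.image_inter _ _ hinj, ← hD1, ← hD2]
    rw [← this, hDD1, himgU]
  -- D ∪ D1 ∪ D2 = univ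
  have huniv : D ∪ D1 ∪ D2 = Finset.univ := by
    have h1 := Finset.card_union_add_card_inter D D1
    have h2 := Finset.card_union_add_card_inter (D ∪ D1) D2
    have h3' : (D ∪ D1) ∩ D2 = U := by
      rw [Finset.union_inter_distrib_right, hDD2, hD1D2, Finset.union_self]
    rw [hDD1, hU, hD12, hD1card] at h1
    rw [h3', hU, hD2card] at h2
    rw [← Finset.card_eq_iff_eq_univ, G.card_omega]
    omega
  -- the orbit of x is {x, γ x, γ (γ x)}
  have horb : Finset.univ.filter (fun y => ∃ k : ℕ, (γ ^ k) x = y)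
      = ({x, γ x, γ (γ x)} : Finset Ω) := by
    ext y
    simp only [Finset.mem_filter, Finset.mem_univ, true_and, Finset.mem_insert,
      Finset.mem_singleton]
    constructor
    · rintro ⟨k, rfl⟩
      have hk : γ ^ k = γ ^ (k % 3) := by
        rw [← hord, pow_mod_orderOf]
      have hk3 : k % 3 = 0 ∨ k % 3 = 1 ∨ k % 3 = 2 := by omega
      rcases hk3 with h | h | h <;> rw [hk, h]
      · left; rfl
      · right; left; rfl
      · right; right
        simp [pow_succ, Equiv.Perm.mul_apply]
    · rintro (rfl | rfl | rfl)
      · exact ⟨0, rfl⟩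
      · exact ⟨1, by simp⟩
      · exact ⟨2, by simp [pow_succ, Equiv.Perm.mul_apply]⟩
  rw [horb]
  -- basic non-fixedness facts
  have hnU : ∀ z : Ω, z ∉ U → γ z ∉ U := by
    intro z hz hgz
    apply hz
    have h1 : γ (γ z) = γ z := (hUfix (γ z)).mpr hgz
    have h2 := congrArg γ h1
    rw [h3 z] at h2
    rw [← hUfix]
    exact (h2.trans h1).symm
  -- if z ∈ D and z ∉ U then D ∩ {z, γ z, γ (γ z)} = {z}
  have hone : ∀ z : Ω, z ∉ U → z ∈ D →
      D ∩ ({z, γ z, γ (γ z)} : Finset Ω) = {z} := by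
    intro z hzU hzD
    have hgzU : γ z ∉ U := hnU z hzU
    have hggzU : γ (γ z) ∉ U := hnU _ hgzU
    have hgzD : γ z ∉ D := by
      intro h
      have : γ z ∈ D ∩ D1 := Finset.mem_inter.mpr ⟨h, Finset.mem_image_of_mem γ hzD⟩
      rw [hDD1] at this
      exact hgzU this
    have hggzD : γ (γ z) ∉ D := by
      intro h
      have h1 : γ z ∈ D1 := Finset.mem_image_of_mem γ hzD
      have : γ (γ z) ∈ D ∩ D2 := Finset.mem_inter.mpr ⟨h, Finset.mem_image_of_mem γ h1⟩
      rw [hDD2] at this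
      exact hggzU this
    ext a
    simp only [Finset.mem_inter, Finset.mem_insert, Finset.mem_singleton]
    constructor
    · rintro ⟨haD, rfl | rfl | rfl⟩
      · rfl
      · exact absurd haD hgzD
      · exact absurd haD hggzD
    · rintro rfl
      exact ⟨hzD, Or.inl rfl⟩
  -- case analysis on which of D, D1, D2 contains x
  have hx : x ∈ D ∪ D1 ∪ D2 := huniv ▸ Finset.mem_univ x
  rcases Finset.mem_union.mp hx with hx' | hxD2
  rcases Finset.mem_union.mp hx' with hxD | hxD1
  · rw [hone x hxU hxD, Finset.card_singleton]
  · -- x ∈ D1, so γ (γ x) ∈ D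
    obtain ⟨d, hd, hdx⟩ := Finset.mem_image.mp hxD1
    have hz : γ (γ x) ∈ D := by
      have : γ (γ (γ d)) = d := h3 d
      rw [hdx] at this
      rwa [this]
    have hzU : γ (γ x) ∉ U := hnU _ (hnU _ hxU)
    have hTeq : ({x, γ x, γ (γ x)} : Finset Ω)
        = {γ (γ x), γ (γ (γ x)), γ (γ (γ (γ x)))} := by
      have e1 : γ (γ (γ x)) = x := h3 x
      rw [e1]
      exact aux_rot x (γ x) (γ (γ x))
    rw [hTeq, hone _ hzU hz, Finset.card_singleton]
  · -- x ∈ D2, so γ x ∈ D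
    obtain ⟨d1, hd1, hd1x⟩ := Finset.mem_image.mp hxD2
    obtain ⟨d, hd, hdd1⟩ := Finset.mem_image.mp hd1
    have hz : γ x ∈ D := by
      have : x = γ (γ d) := by rw [hdd1]; exact hd1x.symm
      rw [this, h3 d]
      exact hd
    have hzU : γ x ∉ U := hnU _ hxU
    have hTeq : ({x, γ x, γ (γ x)} : Finset Ω)
        = {γ x, γ (γ x), γ (γ (γ x))} := by
      rw [h3 x]
      exact (aux_rot (γ x) (γ (γ x)) x).symm
    rw [hTeq, hone _ hzU hz, Finset.card_singleton]
end

section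
/- Let R be an irreducible root system of type ADE with Coxeter number h. (a) The kernel of any surjective-or-not linear form Q(R) → ℤ/pℤ with p < h contains a root of R. (b) There is a unique Weyl group orbit of linear forms Q(R) → ℤ/hℤ whose kernel contains no root, namely the orbit of x ↦ ρ·x mod h, where ρ is the Weyl vector. -/
open scoped RealInnerProductSpace

/-- The data of an (ADE, norm-2 normalized) root system with a chosen base: the set `R`
of roots, the simple roots `α`, the marks `n` of the highest root, and the fundamental
weights `ϖ`. -/
structure RootSystemData (V : Type*) [NormedAddCommGroup V] [InnerProductSpace ℝ V]
    (l : ℕ) : Type _ where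
  R : Finset V
  α : Fin l → V
  n : Fin l → ℕ
  ϖ : Fin l → V
  basis_indep : LinearIndependent ℝ α
  basis_span : Submodule.span ℝ (Set.range α) = ⊤
  simple_mem : ∀ i, α i ∈ R
  norm_two : ∀ β ∈ R, ⟪β, β⟫ = 2
  integral : ∀ β ∈ R, ∀ γ ∈ R, ∃ k : ℤ, ⟪β, γ⟫ = k
  reflect_mem : ∀ β ∈ R, ∀ γ ∈ R, γ - ⟪β, γ⟫ • β ∈ R
  pos_decomp : ∀ β ∈ R, (∃ cf : Fin l → ℕ, β = ∑ i, (cf i : ℝ) • α i) ∨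
    (∃ cf : Fin l → ℕ, β = -∑ i, (cf i : ℝ) • α i)
  n_pos : ∀ i, 0 < n i
  highest_mem : (∑ i, (n i : ℝ) • α i) ∈ R
  highest_bound : ∀ β ∈ R, ∀ cf : Fin l → ℤ, β = ∑ i, (cf i : ℝ) • α i →
    ∀ i, cf i ≤ n i
  weight_dual : ∀ i j, ⟪ϖ i, α j⟫ = if i = j then 1 else 0

/-- Irreducibility of a root system: it admits no splitting into two nonempty mutually
orthogonal parts. -/
def RootSystemData.IsIrreducible {V : Type*} [NormedAddCommGroup V]
    [InnerProductSpace ℝ V] {l : ℕ} (D : RootSystemData V l) : Prop :=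
  ¬ ∃ S : Finset V, S.Nonempty ∧ S ⊆ D.R ∧ S ≠ D.R ∧
    ∀ β ∈ S, ∀ γ ∈ D.R, γ ∉ S → ⟪β, γ⟫ = 0

/-- The Weyl group: the subgroup of `GL(V)` generated by the reflections in the
roots. -/
def RootSystemData.weyl {V : Type*} [NormedAddCommGroup V] [InnerProductSpace ℝ V]
    {l : ℕ} (D : RootSystemData V l) : Subgroup (V ≃ₗ[ℝ] V) :=
  Subgroup.closure {f : V ≃ₗ[ℝ] V | ∃ β ∈ D.R, ∀ x : V, f x = x - ⟪β, x⟫ • β}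

namespace RootSystemData
variable {V : Type*} [NormedAddCommGroup V] [InnerProductSpace ℝ V] {l : ℕ}
variable (D : RootSystemData V l)

noncomputable def theta : V := ∑ i, (D.n i : ℝ) • D.α i

noncomputable def rho : V := ∑ i, D.ϖ i

lemma theta_mem : D.theta ∈ D.R := D.highest_mem

lemma rho_alpha (i : Fin l) : ⟪D.rho, D.α i⟫ = 1 := by
  rw [rho, sum_inner]
  simp [D.weight_dual]

lemma neg_mem {β : V} (hβ : β ∈ D.R) : -β ∈ D.R := by
  have h := D.reflect_mem β hβ β hβ
  rw [D.norm_two β hβ] at h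
  have : β - (2:ℝ) • β = -β := by module
  rwa [this] at h

lemma root_int_comb {β : V} (hβ : β ∈ D.R) :
    ∃ cf : Fin l → ℤ, β = ∑ i, (cf i : ℝ) • D.α i := by
  rcases D.pos_decomp β hβ with ⟨c, hc⟩ | ⟨c, hc⟩
  · exact ⟨fun i => (c i : ℤ), by rw [hc]; push_cast; rfl⟩
  · exact ⟨fun i => -(c i : ℤ), by rw [hc, ← Finset.sum_neg_distrib]; push_cast
                                   simp [neg_smul]⟩

lemma root_mem_span {β : V} (hβ : β ∈ D.R) : β ∈ Submodule.span ℤ (Set.range D.α) := by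
  obtain ⟨c, hc⟩ := D.root_int_comb hβ
  rw [hc]
  refine Submodule.sum_mem _ fun i _ => ?_
  rw [Int.cast_smul_eq_zsmul]
  exact Submodule.smul_mem _ _ (Submodule.subset_span ⟨i, rfl⟩)

lemma pair_int (ξ : V) (hξ : ∀ i, ∃ k : ℤ, ⟪ξ, D.α i⟫ = k) {x : V}
    (hx : x ∈ Submodule.span ℤ (Set.range D.α)) : ∃ k : ℤ, ⟪ξ, x⟫ = k := by
  induction hx using Submodule.span_induction with
  | mem x hx => obtain ⟨i, rfl⟩ := hx; exact hξ i
  | zero => exact ⟨0, by simp⟩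
  | add x y _ _ hx hy =>
      obtain ⟨k, hk⟩ := hx; obtain ⟨m, hm⟩ := hy
      exact ⟨k + m, by rw [inner_add_right, hk, hm]; push_cast; ring⟩
  | smul a x _ hx =>
      obtain ⟨k, hk⟩ := hx
      exact ⟨a * k, by rw [← Int.cast_smul_eq_zsmul ℝ, real_inner_smul_right, hk]; push_cast; ring⟩

lemma root_pair_int {γ : V} (hγ : γ ∈ D.R) {x : V}
    (hx : x ∈ Submodule.span ℤ (Set.range D.α)) : ∃ k : ℤ, ⟪γ, x⟫ = k :=
  D.pair_int γ (fun i => D.integral γ hγ (D.α i) (D.simple_mem i)) hx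


lemma rho_root_pos {β : V} (hβ : β ∈ D.R) (c : Fin l → ℕ)
    (hc : β = ∑ i, (c i : ℝ) • D.α i) :
    ∃ k : ℤ, ⟪D.rho, β⟫ = k ∧ 1 ≤ k ∧ k ≤ ∑ i, (D.n i : ℤ) := by
  refine ⟨∑ i, (c i : ℤ), ?_, ?_, ?_⟩
  · rw [hc, inner_sum]
    simp only [real_inner_smul_right, D.rho_alpha, mul_one]
    push_cast; rfl
  · by_contra hlt
    push_neg at hlt
    have hz : ∀ i, (c i : ℤ) = 0 := by
      intro i
      have hs : (c i : ℤ) ≤ ∑ j, (c j : ℤ) :=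
        Finset.single_le_sum (fun j _ => Int.ofNat_nonneg _) (Finset.mem_univ i)
      omega
    have hβ0 : β = 0 := by
      rw [hc]
      refine Finset.sum_eq_zero fun i _ => ?_
      have : (c i : ℤ) = 0 := hz i
      have : (c i : ℝ) = 0 := by exact_mod_cast this
      simp [this]
    have := D.norm_two β hβ
    rw [hβ0] at this
    simp at this
  · have hb := D.highest_bound β hβ (fun i => (c i : ℤ)) (by rw [hc]; push_cast; rfl)
    exact Finset.sum_le_sum fun i _ => hb i

lemma rho_root_bound {β : V} (hβ : β ∈ D.R) :
    ∃ k : ℤ, ⟪D.rho, β⟫ = k ∧ k ≠ 0 ∧ k.natAbs ≤ ∑ i, D.n i := by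
  have hsum : ((∑ i, D.n i : ℕ) : ℤ) = ∑ i, (D.n i : ℤ) := by push_cast; rfl
  rcases D.pos_decomp β hβ with ⟨c, hc⟩ | ⟨c, hc⟩
  · obtain ⟨k, hk, h1, h2⟩ := D.rho_root_pos hβ c hc
    exact ⟨k, hk, by omega, by omega⟩
  · have hnb : -β ∈ D.R := D.neg_mem hβ
    obtain ⟨k, hk, h1, h2⟩ := D.rho_root_pos hnb c (by rw [hc, neg_neg])
    refine ⟨-k, ?_, by omega, by omega⟩
    have : ⟪D.rho, -β⟫ = (k:ℝ) := hk
    rw [inner_neg_right] at this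
    push_cast
    linarith

/-- Reflection in a norm-2 vector, as a linear equivalence. -/
noncomputable def sref (β : V) (h2 : ⟪β, β⟫ = (2:ℝ)) : V ≃ₗ[ℝ] V where
  toFun x := x - ⟪β, x⟫ • β
  invFun x := x - ⟪β, x⟫ • β
  map_add' x y := by
    simp only [inner_add_right, add_smul]
    abel
  map_smul' c x := by
    simp only [real_inner_smul_right, RingHom.id_apply, smul_sub, smul_smul]
  left_inv x := by
    simp only [inner_sub_right, real_inner_smul_right, h2]
    rw [sub_smul, mul_comm]
    module
  right_inv x := by
    simp only [inner_sub_right, real_inner_smul_right, h2]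
    rw [sub_smul, mul_comm]
    module

lemma sref_apply (β : V) (h2 : ⟪β, β⟫ = (2:ℝ)) (x : V) :
    sref β h2 x = x - ⟪β, x⟫ • β := rfl

lemma sref_mem_weyl {β : V} (hβ : β ∈ D.R) (h2 : ⟪β, β⟫ = (2:ℝ)) :
    sref β h2 ∈ D.weyl :=
  Subgroup.subset_closure ⟨β, hβ, fun _ => rfl⟩

lemma refl_isom {β : V} (h2 : ⟪β, β⟫ = (2:ℝ)) (x y : V) :
    ⟪x - ⟪β, x⟫ • β, y - ⟪β, y⟫ • β⟫ = ⟪x, y⟫ := by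
  simp only [inner_sub_left, inner_sub_right, real_inner_smul_left, real_inner_smul_right, h2,
    real_inner_comm β x, real_inner_comm β y]
  ring

lemma refl_invol {β : V} (h2 : ⟪β, β⟫ = (2:ℝ)) (f : V ≃ₗ[ℝ] V)
    (hf : ∀ x : V, f x = x - ⟪β, x⟫ • β) (x : V) : f (f x) = x := by
  rw [hf, hf]
  simp only [inner_sub_right, real_inner_smul_right, h2]
  rw [sub_smul, mul_comm]
  module

lemma mul_apply (a b : V ≃ₗ[ℝ] V) (x : V) : (a * b) x = a (b x) := rfl

lemma inv_apply_apply (a : V ≃ₗ[ℝ] V) (x : V) : a (a⁻¹ x) = x := a.apply_symm_apply x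

lemma apply_inv_apply (a : V ≃ₗ[ℝ] V) (x : V) : a⁻¹ (a x) = x := a.symm_apply_apply x

lemma weyl_prop {w : V ≃ₗ[ℝ] V} (hw : w ∈ D.weyl) :
    (∀ x y : V, ⟪w x, w y⟫ = ⟪x, y⟫) ∧ (∀ γ ∈ D.R, w γ ∈ D.R) ∧
      (∀ γ ∈ D.R, w⁻¹ γ ∈ D.R) := by
  induction hw using Subgroup.closure_induction with
  | mem f hf =>
      obtain ⟨β, hβ, hfx⟩ := hf
      have h2 := D.norm_two β hβ
      refine ⟨fun x y => by rw [hfx, hfx]; exact refl_isom h2 x y,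
        fun γ hγ => by rw [hfx]; exact D.reflect_mem β hβ γ hγ, fun γ hγ => ?_⟩
      have h3 : f⁻¹ γ = f γ := by
        conv_lhs => rw [← refl_invol h2 f hfx γ]
        exact apply_inv_apply f (f γ)
      rw [h3, hfx]
      exact D.reflect_mem β hβ γ hγ
  | one => exact ⟨fun _ _ => rfl, fun γ hγ => hγ, fun γ hγ => hγ⟩
  | mul a b _ _ pa pb =>
      refine ⟨fun x y => by rw [mul_apply, mul_apply, pa.1, pb.1],
        fun γ hγ => by rw [mul_apply]; exact pa.2.1 _ (pb.2.1 γ hγ), fun γ hγ => ?_⟩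
      rw [mul_inv_rev, mul_apply]
      exact pb.2.2 _ (pa.2.2 γ hγ)
  | inv a _ pa =>
      refine ⟨fun x y => ?_, pa.2.2, by rw [inv_inv]; exact pa.2.1⟩
      rw [← pa.1 (a⁻¹ x) (a⁻¹ y), inv_apply_apply, inv_apply_apply]

lemma weyl_mapQ {w : V ≃ₗ[ℝ] V} (hw : w ∈ D.weyl) :
    (∀ x ∈ Submodule.span ℤ (Set.range D.α), w x ∈ Submodule.span ℤ (Set.range D.α)) ∧
      (∀ x ∈ Submodule.span ℤ (Set.range D.α), w⁻¹ x ∈ Submodule.span ℤ (Set.range D.α)) := by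
  induction hw using Subgroup.closure_induction with
  | mem f hf =>
      obtain ⟨β, hβ, hfx⟩ := hf
      have h2 := D.norm_two β hβ
      have fwd : ∀ x ∈ Submodule.span ℤ (Set.range D.α), f x ∈ Submodule.span ℤ (Set.range D.α) := by
        intro x hx
        rw [hfx]
        obtain ⟨k, hk⟩ := D.root_pair_int hβ hx
        rw [hk, Int.cast_smul_eq_zsmul]
        exact Submodule.sub_mem _ hx (Submodule.smul_mem _ _ (D.root_mem_span hβ))
      refine ⟨fwd, fun x hx => ?_⟩
      have h3 : f⁻¹ x = f x := by
        conv_lhs => rw [← refl_invol h2 f hfx x]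
        exact apply_inv_apply f (f x)
      rw [h3]; exact fwd x hx
  | one => exact ⟨fun x hx => hx, fun x hx => hx⟩
  | mul a b _ _ pa pb =>
      refine ⟨fun x hx => by rw [mul_apply]; exact pa.1 _ (pb.1 x hx), fun x hx => ?_⟩
      rw [mul_inv_rev, mul_apply]
      exact pb.2 _ (pa.2 x hx)
  | inv a _ pa => exact ⟨pa.2, by rw [inv_inv]; exact pa.1⟩

lemma rho_theta : ⟪D.rho, D.theta⟫ = ∑ i, (D.n i : ℝ) := by
  rw [theta, inner_sum]
  simp [real_inner_smul_right, D.rho_alpha]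

lemma inner_sub_smul (u v : V) (c : ℝ) :
    ⟪u - c • v, u - c • v⟫ = ⟪u, u⟫ - 2*c*⟪v, u⟫ + c^2*⟪v, v⟫ := by
  simp only [inner_sub_left, inner_sub_right, real_inner_smul_left, real_inner_smul_right,
    real_inner_comm u v]
  ring

lemma transfer (p : ℕ) {w : V ≃ₗ[ℝ] V} (hw : w ∈ D.weyl) {q : V}
    (hq : q ∈ Submodule.span ℤ (Set.range D.α)) {ξ ξ' : V}
    (heq : ξ' = w ξ + (p : ℝ) • q) {γ : V} (hγ : γ ∈ D.R) (c : ℤ)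
    (hc : ⟪ξ', γ⟫ = c) :
    ∃ β ∈ D.R, ∃ k : ℤ, ⟪ξ, β⟫ = k ∧ (k : ZMod p) = (c : ZMod p) := by
  obtain ⟨m, hm⟩ := D.root_pair_int hγ hq
  refine ⟨w⁻¹ γ, (D.weyl_prop hw).2.2 γ hγ, c - p * m, ?_, ?_⟩
  · have h1 : ⟪ξ, w⁻¹ γ⟫ = ⟪w ξ, γ⟫ := by
      conv_rhs => rw [← inv_apply_apply w γ]
      exact ((D.weyl_prop hw).1 ξ (w⁻¹ γ)).symm
    have h2 : ⟪w ξ, γ⟫ = ⟪ξ', γ⟫ - (p:ℝ) * ⟪q, γ⟫ := by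
      rw [heq, inner_add_left, real_inner_smul_left]; ring
    rw [h1, h2, hc, show (⟪q, γ⟫ : ℝ) = (m:ℝ) by rw [real_inner_comm]; exact hm]
    push_cast; ring
  · push_cast
    simp [ZMod.natCast_self]

lemma descent (p : ℕ) (hp : 1 ≤ p) (N : ℕ) :
    ∀ ξ : V, (∀ i, ∃ k : ℤ, ⟪ξ, D.α i⟫ = k) →
    ⟪((1 + ∑ i, D.n i : ℕ) : ℝ) • ξ - (p : ℝ) • D.rho,
      ((1 + ∑ i, D.n i : ℕ) : ℝ) • ξ - (p : ℝ) • D.rho⟫ ≤ (N : ℝ) →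
    ∃ w ∈ D.weyl, ∃ q ∈ Submodule.span ℤ (Set.range D.α), ∃ ξ' : V,
      ξ' = w ξ + (p : ℝ) • q ∧ (∀ i, ∃ k : ℤ, ⟪ξ', D.α i⟫ = k ∧ 0 ≤ k) ∧
      ∃ t : ℤ, ⟪ξ', D.theta⟫ = t ∧ t ≤ (p : ℤ) := by
  induction N using Nat.strong_induction_on with
  | _ N ih =>
  intro ξ hint hM
  set h : ℕ := 1 + ∑ i, D.n i with hh
  have hh1 : (1:ℝ) ≤ (h:ℝ) := by
    have : 1 ≤ h := by omega
    exact_mod_cast this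
  have hp1 : (1:ℝ) ≤ (p:ℝ) := by exact_mod_cast hp
  choose k hk using hint
  by_cases hneg : ∀ i, 0 ≤ k i
  · -- all simple pairings nonnegative
    have hθ : ⟪ξ, D.theta⟫ = ((∑ i, (D.n i : ℤ) * k i : ℤ) : ℝ) := by
      rw [theta, inner_sum]
      push_cast
      simp [real_inner_smul_right, hk]
    set t : ℤ := ∑ i, (D.n i : ℤ) * k i with hts
    by_cases ht : t ≤ (p:ℤ)
    · exact ⟨1, one_mem _, 0, Submodule.zero_mem _, ξ, by simp,
        fun i => ⟨k i, hk i, hneg i⟩, t, hθ, ht⟩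
    · -- affine step in θ
      push_neg at ht
      have h2θ : ⟪D.theta, D.theta⟫ = (2:ℝ) := D.norm_two _ D.theta_mem
      set d : ℤ := t - p with hd
      have hd1 : (1:ℝ) ≤ (d:ℝ) := by
        have : 1 ≤ d := by omega
        exact_mod_cast this
      set ξ₁ := ξ - (d : ℝ) • D.theta with hξ₁
      have hθξ : ⟪D.theta, ξ⟫ = ((t:ℤ):ℝ) := by rw [real_inner_comm]; exact hθ
      have hstep : ξ₁ = sref D.theta h2θ ξ + (p : ℝ) • D.theta := by
        rw [hξ₁, sref_apply, hθξ, hd]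
        push_cast
        module
      have hint₁ : ∀ j, ∃ m : ℤ, ⟪ξ₁, D.α j⟫ = m := by
        intro j
        obtain ⟨m, hm⟩ := D.integral _ D.theta_mem _ (D.simple_mem j)
        refine ⟨k j - d * m, ?_⟩
        rw [hξ₁, inner_sub_left, real_inner_smul_left, hk j, hm]
        push_cast; ring
      have hrθ : ⟪D.theta, D.rho⟫ = (h:ℝ) - 1 := by
        rw [real_inner_comm, D.rho_theta]
        rw [hh]; push_cast; ring
      have hu1 : (h:ℝ) • ξ₁ - (p:ℝ) • D.rho
          = ((h:ℝ) • ξ - (p:ℝ) • D.rho) - ((h:ℝ)*(d:ℝ)) • D.theta := by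
        rw [hξ₁]; module
      have hvu : ⟪D.theta, (h:ℝ) • ξ - (p:ℝ) • D.rho⟫
          = (h:ℝ)*(t:ℝ) - (p:ℝ)*((h:ℝ)-1) := by
        rw [inner_sub_right, real_inner_smul_right, real_inner_smul_right, hrθ, hθξ]
      have htd : (t:ℝ) = (d:ℝ) + (p:ℝ) := by rw [hd]; push_cast; ring
      have hMexact : ⟪(h:ℝ) • ξ₁ - (p:ℝ) • D.rho, (h:ℝ) • ξ₁ - (p:ℝ) • D.rho⟫
          = ⟪(h:ℝ) • ξ - (p:ℝ) • D.rho, (h:ℝ) • ξ - (p:ℝ) • D.rho⟫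
            - 2*(h:ℝ)*(d:ℝ)*(p:ℝ) := by
        rw [hu1, inner_sub_smul, hvu, h2θ, htd]
        ring
      have hhd : (1:ℝ) ≤ (h:ℝ)*(d:ℝ) := by nlinarith
      have hone : (1:ℝ) ≤ (h:ℝ)*(d:ℝ)*(p:ℝ) := by nlinarith
      have hN1 : 1 ≤ N := by
        by_contra hN
        have hN0 : N = 0 := by omega
        have := real_inner_self_nonneg (x := (h:ℝ) • ξ₁ - (p:ℝ) • D.rho)
        rw [hN0] at hM
        push_cast at hM
        linarith
      have hM1 : ⟪(h:ℝ) • ξ₁ - (p:ℝ) • D.rho, (h:ℝ) • ξ₁ - (p:ℝ) • D.rho⟫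
          ≤ ((N - 1 : ℕ) : ℝ) := by
        rw [Nat.cast_sub hN1]
        push_cast
        linarith
      obtain ⟨w, hw, q, hq, ξ', he, hpos, ht'⟩ := ih (N - 1) (by omega) ξ₁ hint₁ hM1
      refine ⟨w * sref D.theta h2θ, mul_mem hw (D.sref_mem_weyl D.theta_mem h2θ),
        w D.theta + q, Submodule.add_mem _
          ((D.weyl_mapQ hw).1 _ (D.root_mem_span D.theta_mem)) hq, ξ', ?_, hpos, ht'⟩
      rw [he, hstep, map_add, map_smul, mul_apply, smul_add]
      abel
  · -- some simple pairing negative: simple reflection step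
    push_neg at hneg
    obtain ⟨i, hki⟩ := hneg
    have hki1 : (k i : ℝ) ≤ -1 := by
      have : k i ≤ -1 := by omega
      exact_mod_cast this
    have h2i : ⟪D.α i, D.α i⟫ = (2:ℝ) := D.norm_two _ (D.simple_mem i)
    set ξ₁ := ξ - (k i : ℝ) • D.α i with hξ₁
    have hαξ : ⟪D.α i, ξ⟫ = ((k i : ℤ):ℝ) := by rw [real_inner_comm]; exact hk i
    have hstep : ξ₁ = sref (D.α i) h2i ξ := by rw [hξ₁, sref_apply, hαξ]
    have hint₁ : ∀ j, ∃ m : ℤ, ⟪ξ₁, D.α j⟫ = m := by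
      intro j
      obtain ⟨m, hm⟩ := D.integral _ (D.simple_mem i) _ (D.simple_mem j)
      refine ⟨k j - k i * m, ?_⟩
      rw [hξ₁, inner_sub_left, real_inner_smul_left, hk j, hm]
      push_cast; ring
    have hrα : ⟪D.α i, D.rho⟫ = 1 := by rw [real_inner_comm]; exact D.rho_alpha i
    have hu1 : (h:ℝ) • ξ₁ - (p:ℝ) • D.rho
        = ((h:ℝ) • ξ - (p:ℝ) • D.rho) - ((h:ℝ)*(k i:ℝ)) • D.α i := by
      rw [hξ₁]; module
    have hvu : ⟪D.α i, (h:ℝ) • ξ - (p:ℝ) • D.rho⟫ = (h:ℝ)*(k i:ℝ) - (p:ℝ) := by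
      rw [inner_sub_right, real_inner_smul_right, real_inner_smul_right, hrα, hαξ]
      push_cast; ring
    have hMexact : ⟪(h:ℝ) • ξ₁ - (p:ℝ) • D.rho, (h:ℝ) • ξ₁ - (p:ℝ) • D.rho⟫
        = ⟪(h:ℝ) • ξ - (p:ℝ) • D.rho, (h:ℝ) • ξ - (p:ℝ) • D.rho⟫
          + 2*(h:ℝ)*(k i:ℝ)*(p:ℝ) := by
      rw [hu1, inner_sub_smul, hvu, h2i]
      ring
    have hhp : (1:ℝ) ≤ (h:ℝ)*(p:ℝ) := by nlinarith
    have hmul : ((h:ℝ)*(p:ℝ))*(k i:ℝ) ≤ 1*(k i:ℝ) :=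
      mul_le_mul_of_nonpos_right hhp (by linarith)
    have hone : (h:ℝ)*(k i:ℝ)*(p:ℝ) ≤ -1 := by nlinarith [hmul]
    have hN1 : 1 ≤ N := by
      by_contra hN
      have hN0 : N = 0 := by omega
      have := real_inner_self_nonneg (x := (h:ℝ) • ξ₁ - (p:ℝ) • D.rho)
      rw [hN0] at hM
      push_cast at hM
      linarith
    have hM1 : ⟪(h:ℝ) • ξ₁ - (p:ℝ) • D.rho, (h:ℝ) • ξ₁ - (p:ℝ) • D.rho⟫
        ≤ ((N - 1 : ℕ) : ℝ) := by
      rw [Nat.cast_sub hN1]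
      push_cast
      linarith
    obtain ⟨w, hw, q, hq, ξ', he, hpos, ht'⟩ := ih (N - 1) (by omega) ξ₁ hint₁ hM1
    refine ⟨w * sref (D.α i) h2i, mul_mem hw (D.sref_mem_weyl (D.simple_mem i) h2i),
      q, hq, ξ', ?_, hpos, ht'⟩
    rw [he, hstep, mul_apply]

lemma theta_pair (ξ : V) (k : Fin l → ℤ) (hk : ∀ i, ⟪ξ, D.α i⟫ = k i) :
    ⟪ξ, D.theta⟫ = ((∑ i, (D.n i : ℤ) * k i : ℤ) : ℝ) := by
  rw [theta, inner_sum]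
  push_cast
  simp [real_inner_smul_right, hk]

end RootSystemData

theorem statement13' {V : Type*} [NormedAddCommGroup V] [InnerProductSpace ℝ V]
    {l : ℕ} (hl : 1 ≤ l) (D : RootSystemData V l)
    (h : ℕ) (hh : h = 1 + ∑ i, D.n i) :
    (∀ p : ℕ, 1 ≤ p → p < h →
      ∀ ξ : V, (∀ i, ∃ k : ℤ, ⟪ξ, D.α i⟫ = k) →
        ∃ β ∈ D.R, ∃ k : ℤ, ⟪ξ, β⟫ = k ∧ (k : ZMod p) = 0) ∧
    (∀ β ∈ D.R, ∃ k : ℤ, ⟪∑ i, D.ϖ i, β⟫ = k ∧ (k : ZMod h) ≠ 0) ∧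
    (∀ ξ : V, (∀ i, ∃ k : ℤ, ⟪ξ, D.α i⟫ = k) →
      (∀ β ∈ D.R, ∀ k : ℤ, ⟪ξ, β⟫ = k → (k : ZMod h) ≠ 0) →
      ∃ w ∈ D.weyl, ∃ q ∈ Submodule.span ℤ (Set.range D.α),
        w ξ = (∑ i, D.ϖ i) + (h : ℝ) • q) := by
  have hsumpos : 1 ≤ ∑ i, D.n i := by
    calc 1 ≤ D.n ⟨0, hl⟩ := D.n_pos _
    _ ≤ ∑ i, D.n i := Finset.single_le_sum (fun i _ => Nat.zero_le _) (Finset.mem_univ _)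
  refine ⟨?_, ?_, ?_⟩
  · -- (a)
    intro p hp hph ξ hint
    obtain ⟨w, hw, q, hq, ξ', he, hpos, t, htv, htle⟩ :=
      D.descent p hp
        ⌈⟪((1 + ∑ i, D.n i : ℕ) : ℝ) • ξ - (p : ℝ) • D.rho,
          ((1 + ∑ i, D.n i : ℕ) : ℝ) • ξ - (p : ℝ) • D.rho⟫⌉₊ ξ hint (Nat.le_ceil _)
    choose k' hk' hk'pos using hpos
    by_cases hz : ∃ i, k' i = 0
    · obtain ⟨i, hi⟩ := hz
      obtain ⟨β, hβ, kk, hkk, hmod⟩ :=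
        D.transfer p hw hq he (D.simple_mem i) (k' i) (hk' i)
      exact ⟨β, hβ, kk, hkk, by rw [hmod, hi]; simp⟩
    · push_neg at hz
      have h1 : ∀ i, 1 ≤ k' i := fun i => by
        have h0 := hk'pos i; have h2 := hz i; omega
      have htsum := D.theta_pair ξ' k' hk'
      have ht' : t = ∑ i, (D.n i : ℤ) * k' i := by
        have := (htv.symm.trans htsum)
        exact_mod_cast this
      have hlow : (∑ i, (D.n i : ℤ)) ≤ t := by
        rw [ht']
        refine Finset.sum_le_sum fun i _ => ?_
        exact le_mul_of_one_le_right (Int.ofNat_nonneg _) (h1 i)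
      have hph' : (p : ℤ) ≤ ∑ i, (D.n i : ℤ) := by
        have h2 : p ≤ ∑ i, D.n i := by omega
        have h3 : ((∑ i, D.n i : ℕ) : ℤ) = ∑ i, (D.n i : ℤ) := by push_cast; rfl
        omega
      have htp : t = (p : ℤ) := le_antisymm htle (le_trans hph' hlow)
      obtain ⟨β, hβ, kk, hkk, hmod⟩ := D.transfer p hw hq he D.theta_mem t htv
      refine ⟨β, hβ, kk, hkk, ?_⟩
      rw [hmod, htp]
      push_cast
      simp [ZMod.natCast_self]
  · -- (b) first part
    intro β hβ
    obtain ⟨kk, hkk, hne, hle⟩ := D.rho_root_bound hβ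
    refine ⟨kk, hkk, fun h0 => hne ?_⟩
    have hdvd : (h : ℤ) ∣ kk := (ZMod.intCast_zmod_eq_zero_iff_dvd kk h).mp h0
    have habs : |kk| < (h : ℤ) := by
      rw [Int.abs_eq_natAbs]
      omega
    exact Int.eq_zero_of_abs_lt_dvd hdvd habs
  · -- (b) second part
    intro ξ hint hker
    obtain ⟨w, hw, q, hq, ξ', he, hpos, t, htv, htle⟩ :=
      D.descent h (by omega)
        ⌈⟪((1 + ∑ i, D.n i : ℕ) : ℝ) • ξ - (h : ℝ) • D.rho,
          ((1 + ∑ i, D.n i : ℕ) : ℝ) • ξ - (h : ℝ) • D.rho⟫⌉₊ ξ hint (Nat.le_ceil _)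
    have hker' : ∀ γ ∈ D.R, ∀ c : ℤ, ⟪ξ', γ⟫ = c → (c : ZMod h) ≠ 0 := by
      intro γ hγ c hc h0
      obtain ⟨β, hβ, kk, hkk, hmod⟩ := D.transfer h hw hq he hγ c hc
      exact hker β hβ kk hkk (by rw [hmod, h0])
    choose k' hk' hk'pos using hpos
    have h1 : ∀ i, 1 ≤ k' i := by
      intro i
      have h0 := hk'pos i
      rcases eq_or_lt_of_le h0 with h2 | h2
      · exfalso
        exact hker' _ (D.simple_mem i) (k' i) (hk' i) (by rw [← h2]; simp)
      · omega
    have htsum := D.theta_pair ξ' k' hk'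
    have ht' : t = ∑ i, (D.n i : ℤ) * k' i := by
      have := (htv.symm.trans htsum)
      exact_mod_cast this
    have hth : t ≠ (h : ℤ) := by
      intro h0
      refine hker' _ D.theta_mem t htv ?_
      rw [h0]
      push_cast
      simp [ZMod.natCast_self]
    have hlow : (∑ i, (D.n i : ℤ)) ≤ t := by
      rw [ht']
      refine Finset.sum_le_sum fun i _ => ?_
      exact le_mul_of_one_le_right (Int.ofNat_nonneg _) (h1 i)
    have hsumh : ∑ i, (D.n i : ℤ) = (h : ℤ) - 1 := by
      have h3 : ((∑ i, D.n i : ℕ) : ℤ) = ∑ i, (D.n i : ℤ) := by push_cast; rfl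
      omega
    have hteq : ∑ i, (D.n i : ℤ) = ∑ i, (D.n i : ℤ) * k' i := by
      rw [← ht']
      omega
    have hone : ∀ i, k' i = 1 := by
      intro i
      have := (Finset.sum_eq_sum_iff_of_le
        (fun i _ => le_mul_of_one_le_right (Int.ofNat_nonneg _) (h1 i))).mp hteq i
        (Finset.mem_univ i)
      have hn1 : (1 : ℤ) ≤ (D.n i : ℤ) := by exact_mod_cast D.n_pos i
      have h0 : (D.n i : ℤ) * (k' i - 1) = 0 := by ring_nf; linarith
      rcases mul_eq_zero.mp h0 with h2 | h2
      · omega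
      · omega
    have hξρ : ξ' = D.rho := by
      have hsub : ∀ v ∈ Submodule.span ℝ (Set.range D.α), ⟪ξ' - D.rho, v⟫ = 0 := by
        intro v hv
        induction hv using Submodule.span_induction with
        | mem v hv =>
            obtain ⟨i, rfl⟩ := hv
            rw [inner_sub_left, D.rho_alpha, hk' i, hone i]
            norm_num
        | zero => simp
        | add x y _ _ hx hy => rw [inner_add_right, hx, hy]; norm_num
        | smul a x _ hx => rw [real_inner_smul_right, hx]; ring
      have h0 : ⟪ξ' - D.rho, ξ' - D.rho⟫ = 0 :=
        hsub _ (by rw [D.basis_span]; trivial)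
      have := inner_self_eq_zero.mp h0
      rwa [sub_eq_zero] at this
    refine ⟨w, hw, -q, Submodule.neg_mem _ hq, ?_⟩
    have h0 : D.rho = w ξ + (h : ℝ) • q := by rw [← hξρ]; exact he
    show w ξ = D.rho + (h : ℝ) • (-q)
    rw [h0]
    module

/-- Let `R` be an irreducible ADE root system with Coxeter number
`h = 1 + ∑ n_i`.  (a) The kernel of any linear form `Q(R) → ℤ/pℤ` with `p < h`
(parametrized by `ξ ∈ P(R)` via `x ↦ ⟪ξ, x⟫ mod p`) contains a root.  (b) There is a
unique Weyl group orbit of linear forms `Q(R) → ℤ/hℤ` whose kernel contains no root,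
namely the orbit of `x ↦ ⟪ρ, x⟫ mod h` where `ρ = ∑ ϖ_i` is the Weyl vector. -/
theorem statement13 {V : Type*} [NormedAddCommGroup V] [InnerProductSpace ℝ V]
    {l : ℕ} (hl : 1 ≤ l) (D : RootSystemData V l) (hirr : D.IsIrreducible)
    (h : ℕ) (hh : h = 1 + ∑ i, D.n i) :
    -- (a) for `p < h`, any form `x ↦ ⟪ξ, x⟫ mod p` on `Q(R)` kills some root
    (∀ p : ℕ, 1 ≤ p → p < h →
      ∀ ξ : V, (∀ i, ∃ k : ℤ, ⟪ξ, D.α i⟫ = k) →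
        ∃ β ∈ D.R, ∃ k : ℤ, ⟪ξ, β⟫ = k ∧ (k : ZMod p) = 0) ∧
    -- (b) the form attached to the Weyl vector `ρ` kills no root ...
    (∀ β ∈ D.R, ∃ k : ℤ, ⟪∑ i, D.ϖ i, β⟫ = k ∧ (k : ZMod h) ≠ 0) ∧
    -- ... and any `ξ ∈ P(R)` whose associated form mod `h` kills no root is in the
    -- `W(R)`-orbit of `ρ` modulo `h·Q(R)`
    (∀ ξ : V, (∀ i, ∃ k : ℤ, ⟪ξ, D.α i⟫ = k) →
      (∀ β ∈ D.R, ∀ k : ℤ, ⟪ξ, β⟫ = k → (k : ZMod h) ≠ 0) →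
      ∃ w ∈ D.weyl, ∃ q ∈ Submodule.span ℤ (Set.range D.α),
        w ξ = (∑ i, D.ϖ i) + (h : ℝ) • q) := by
  exact statement13' hl D h hh
end
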